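/- arXiv:1008.3691 — 9 statements merged into one kernel-verified Lean document; each statement's English description precedes it below -/
import Mathlib

section
/- For all positive integers r, w, t with w ≤ r and t ≥ r + w, the minimum number of points of an (r,w;1)-cover-free family with t blocks equals the biclique covering number of the bi-intersection graph: N((r,w),t) = bc(I_t(r,w)). -/
/-- `B : Fin t → Finset (Fin n)` is an (r,w;d)-cover-free family: for any disjoint
index sets `L, M` with `|L| = r`, `|M| = w`, the intersection of the blocks in `L`
has at least `d` elements outside the union of the blocks in `M`. -/
def IsCFF (r w d n t : ℕ) (B : Fin t → Finset (Fin n)) : Prop :=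
  ∀ L M : Finset (Fin t), Disjoint L M → L.card = r → M.card = w →
    d ≤ ((L.inf B) \ (M.sup B)).card

/-- `Ncff r w d t` = `N((r,w;d),t)`, the minimum number of points of an
(r,w;d)-CFF with `t` blocks, with the convention that it equals 1 if `r = 0` or `w = 0`. -/
noncomputable def Ncff (r w d t : ℕ) : ℕ :=
  if r = 0 ∨ w = 0 then 1
  else sInf {n : ℕ | ∃ B : Fin t → Finset (Fin n), IsCFF r w d n t B}
/-- `F` is a `d`-biclique cover of `G` by `n` bicliques: each `F i` is a pair of
disjoint vertex sets with all cross pairs adjacent in `G`, and every edge of `G`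
lies in at least `d` of the bicliques. -/
def IsBicliqueCoverD {V : Type*} (G : SimpleGraph V) (d n : ℕ)
    (F : Fin n → Finset V × Finset V) : Prop :=
  (∀ i, Disjoint (F i).1 (F i).2 ∧ ∀ x ∈ (F i).1, ∀ y ∈ (F i).2, G.Adj x y) ∧
  (∀ x y, G.Adj x y →
    d ≤ Nat.card {i : Fin n // (x ∈ (F i).1 ∧ y ∈ (F i).2) ∨ (y ∈ (F i).1 ∧ x ∈ (F i).2)})

/-- `bcD G d` = the `d`-biclique covering number of `G`. -/
noncomputable def bcD {V : Type*} (G : SimpleGraph V) (d : ℕ) : ℕ :=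
  sInf {n : ℕ | ∃ F : Fin n → Finset V × Finset V, IsBicliqueCoverD G d n F}
/-- The bi-intersection graph `I_t(r,w)`: a bipartite graph whose left vertices are
the `r`-subsets of `[t]` and right vertices are the `w`-subsets of `[t]`, with an
`r`-subset adjacent to a `w`-subset iff they are disjoint. -/
def biIntGraph (t r w : ℕ) : SimpleGraph (Finset (Fin t) ⊕ Finset (Fin t)) :=
  SimpleGraph.fromRel (fun a b =>
    ∃ A B : Finset (Fin t), a = Sum.inl A ∧ b = Sum.inr B ∧
      A.card = r ∧ B.card = w ∧ Disjoint A B)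

/-!
A point `i` of an `(r,w)`-cover-free family `B` yields a biclique of `I_t(r,w)`: the
`r`-sets all of whose blocks contain `i` against the `w`-sets none of whose blocks contain
`i`; the cover-free property says exactly that these bicliques cover every edge.
Conversely, in a biclique of `I_t(r,w)` containing an edge `(L, M)` the `r`-sets all sit on
the side of `L` (no two `r`-sets are adjacent), so each of them is disjoint from `M`. Hence
putting `i` into the block `j` whenever `j` lies in some `r`-set of the `i`-th biclique gives
a cover-free family.
Both constructions keep the number of points equal to the number of bicliques.
-/

open Finset

theorem isCFF_one_iff {r w n t : ℕ} {B : Fin t → Finset (Fin n)} :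
    IsCFF r w 1 n t B ↔ ∀ L M : Finset (Fin t), Disjoint L M → L.card = r → M.card = w →
      ∃ i, (∀ l ∈ L, i ∈ B l) ∧ ∀ m ∈ M, i ∉ B m := by
  simp only [IsCFF, Finset.one_le_card, Finset.Nonempty, mem_sdiff, mem_inf, mem_sup,
    not_exists, not_and]

theorem isBicliqueCoverD_one_iff {V : Type*} {G : SimpleGraph V} {n : ℕ}
    {F : Fin n → Finset V × Finset V} :
    IsBicliqueCoverD G 1 n F ↔
      (∀ i, Disjoint (F i).1 (F i).2 ∧ ∀ x ∈ (F i).1, ∀ y ∈ (F i).2, G.Adj x y) ∧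
      ∀ x y, G.Adj x y →
        ∃ i, (x ∈ (F i).1 ∧ y ∈ (F i).2) ∨ (y ∈ (F i).1 ∧ x ∈ (F i).2) := by
  simp only [IsBicliqueCoverD, Nat.one_le_iff_ne_zero, Ne, Finite.card_eq_zero_iff,
    not_isEmpty_iff, nonempty_subtype]

abbrev BiIntVertex (t : ℕ) : Type := Finset (Fin t) ⊕ Finset (Fin t)

namespace biIntGraph

variable {t r w : ℕ} {A B : Finset (Fin t)}

@[simp]
theorem adj_inl_inr : (biIntGraph t r w).Adj (.inl A) (.inr B) ↔
    A.card = r ∧ B.card = w ∧ Disjoint A B := by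
  simp [biIntGraph]

@[simp]
theorem adj_inr_inl : (biIntGraph t r w).Adj (.inr B) (.inl A) ↔
    A.card = r ∧ B.card = w ∧ Disjoint A B := by
  rw [SimpleGraph.adj_comm, adj_inl_inr]

@[simp]
theorem not_adj_inl_inl : ¬(biIntGraph t r w).Adj (.inl A) (.inl B) := by
  simp [biIntGraph]

@[simp]
theorem not_adj_inr_inr : ¬(biIntGraph t r w).Adj (.inr A) (.inr B) := by
  simp [biIntGraph]

theorem disjoint_of_isBiclique {X Y : Finset (BiIntVertex t)}
    (hXY : ∀ x ∈ X, ∀ y ∈ Y, (biIntGraph t r w).Adj x y)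
    {L M : Finset (Fin t)} (hL : .inl L ∈ X) (hM : .inr M ∈ Y)
    (hA : .inl A ∈ X ∨ .inl A ∈ Y) : Disjoint A M := by
  rcases hA with hA | hA
  · exact (adj_inl_inr.1 (hXY _ hA _ hM)).2.2
  · exact absurd (hXY _ hL _ hA) not_adj_inl_inl

end biIntGraph

section Correspondence

variable {r w n t : ℕ}

def pointBiclique (r w : ℕ) (B : Fin t → Finset (Fin n)) (i : Fin n) :
    Finset (BiIntVertex t) × Finset (BiIntVertex t) :=
  ((univ.filter fun A => A.card = r ∧ ∀ l ∈ A, i ∈ B l).disjSum ∅,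
    (∅ : Finset (Finset (Fin t))).disjSum
      (univ.filter fun M => M.card = w ∧ ∀ m ∈ M, i ∉ B m))

def bicliqueBlocks
    (F : Fin n → Finset (BiIntVertex t) × Finset (BiIntVertex t))
    (j : Fin t) : Finset (Fin n) :=
  univ.filter fun i => ∃ A, j ∈ A ∧ (.inl A ∈ (F i).1 ∨ .inl A ∈ (F i).2)

theorem IsCFF.isBicliqueCoverD_pointBiclique {B : Fin t → Finset (Fin n)}
    (hB : IsCFF r w 1 n t B) : IsBicliqueCoverD (biIntGraph t r w) 1 n (pointBiclique r w B) := by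
  rw [isCFF_one_iff] at hB
  refine isBicliqueCoverD_one_iff.2 ⟨fun i => ⟨?_, ?_⟩, ?_⟩
  · rw [disjoint_left]
    rintro (A | A) <;> simp [pointBiclique]
  · rintro (A | A) hA (M | M) hM <;> simp only [pointBiclique, inl_mem_disjSum,
      inr_mem_disjSum, mem_filter, mem_univ, true_and, notMem_empty] at hA hM
    exact biIntGraph.adj_inl_inr.2
      ⟨hA.1, hM.1, disjoint_left.2 fun l hlA hlM => hM.2 l hlM (hA.2 l hlA)⟩
  · have hcover : ∀ L M : Finset (Fin t), L.card = r → M.card = w → Disjoint L M →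
        ∃ i, .inl L ∈ (pointBiclique r w B i).1 ∧ .inr M ∈ (pointBiclique r w B i).2 := by
      intro L M hL hM hLM
      obtain ⟨i, hLi, hMi⟩ := hB L M hLM hL hM
      exact ⟨i, by simpa [pointBiclique] using ⟨⟨hL, hLi⟩, hM, hMi⟩⟩
    rintro (L | M) (L' | M') hadj <;>
      simp only [biIntGraph.adj_inl_inr, biIntGraph.adj_inr_inl, biIntGraph.not_adj_inl_inl,
        biIntGraph.not_adj_inr_inr] at hadj
    · obtain ⟨i, hi⟩ := hcover L M' hadj.1 hadj.2.1 hadj.2.2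
      exact ⟨i, .inl hi⟩
    · obtain ⟨i, hi⟩ := hcover L' M hadj.1 hadj.2.1 hadj.2.2
      exact ⟨i, .inr hi⟩

theorem IsBicliqueCoverD.isCFF_bicliqueBlocks
    {F : Fin n → Finset (BiIntVertex t) × Finset (BiIntVertex t)}
    (hF : IsBicliqueCoverD (biIntGraph t r w) 1 n F) : IsCFF r w 1 n t (bicliqueBlocks F) := by
  obtain ⟨hbiclique, hcover⟩ := isBicliqueCoverD_one_iff.1 hF
  refine isCFF_one_iff.2 fun L M hLM hL hM => ?_
  obtain ⟨i, hi⟩ := hcover _ _ (biIntGraph.adj_inl_inr.2 ⟨hL, hM, hLM⟩)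
  have hdisj : ∀ A, (.inl A ∈ (F i).1 ∨ .inl A ∈ (F i).2) → Disjoint A M := by
    rcases hi with ⟨hL1, hM2⟩ | ⟨hM1, hL2⟩
    · exact fun A hA => biIntGraph.disjoint_of_isBiclique (hbiclique i).2 hL1 hM2 hA
    · exact fun A hA => biIntGraph.disjoint_of_isBiclique
        (fun x hx y hy => ((hbiclique i).2 y hy x hx).symm) hL2 hM1 hA.symm
  refine ⟨i, fun l hl => ?_, fun m hm him => ?_⟩
  · simp only [bicliqueBlocks, mem_filter, mem_univ, true_and]
    exact ⟨L, hl, hi.imp And.left And.right⟩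
  · simp only [bicliqueBlocks, mem_filter, mem_univ, true_and] at him
    obtain ⟨A, hmA, hA⟩ := him
    exact disjoint_left.1 (hdisj A hA) hmA hm

theorem exists_isCFF_iff_exists_isBicliqueCoverD :
    (∃ B, IsCFF r w 1 n t B) ↔ ∃ F, IsBicliqueCoverD (biIntGraph t r w) 1 n F :=
  ⟨fun ⟨_, hB⟩ => ⟨_, hB.isBicliqueCoverD_pointBiclique⟩,
    fun ⟨_, hF⟩ => ⟨_, hF.isCFF_bicliqueBlocks⟩⟩

end Correspondence

theorem cff_eq_biclique_cover_general (r w t : ℕ) (hw : 0 < w) (hwr : w ≤ r) :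
    Ncff r w 1 t = bcD (biIntGraph t r w) 1 := by
  rw [Ncff, if_neg (by omega), bcD]
  simp_rw [exists_isCFF_iff_exists_isBicliqueCoverD]

/-- For positive integers `r, w, t` with `w ≤ r` and `t ≥ r + w`,
`N((r,w),t) = bc(I_t(r,w))`. -/
theorem cff_eq_biclique_cover (r w t : ℕ) (hw : 0 < w) (hwr : w ≤ r) (ht : r + w ≤ t) :
    Ncff r w 1 t = bcD (biIntGraph t r w) 1 :=
  cff_eq_biclique_cover_general r w t hw hwr
end

section
/- For all positive integers r, w, t with w ≤ r and t ≥ r + w, N((r,w),t) ≥ C(r+w, r), where C(·,·) denotes the binomial coefficient. -/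
/-!
Fix `r + w` indices `T`. For an `r`-subset `L ⊆ T`, the cover-free property gives a point lying in
every block of `L` and in no block of `T \ L`; the set of blocks of `T` containing that point is
exactly `L`. So the map sending a point to the set of blocks of `T` containing it hits all
`C(r + w, r)` subsets of size `r`, and there are at least that many points.
-/

open Finset

section Separating

variable {ι α : Type*} [DecidableEq ι] [Fintype α] [DecidableEq α]

theorem filter_mem_eq_of_mem_inf_sdiff_sup {B : ι → Finset α} {T L : Finset ι} (hLT : L ⊆ T)
    {x : α} (hx : x ∈ L.inf B \ (T \ L).sup B) : {i ∈ T | x ∈ B i} = L := by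
  rw [mem_sdiff, mem_inf, mem_sup] at hx
  ext i
  rw [mem_filter]
  refine ⟨fun ⟨hiT, hxi⟩ => ?_, fun hiL => ⟨hLT hiL, hx.1 i hiL⟩⟩
  by_contra hiL
  exact hx.2 ⟨i, mem_sdiff.2 ⟨hiT, hiL⟩, hxi⟩

theorem choose_card_le_card_of_nonempty_inf_sdiff_sup (B : ι → Finset α) (T : Finset ι) (k : ℕ)
    (h : ∀ L ∈ T.powersetCard k, (L.inf B \ (T \ L).sup B).Nonempty) :
    T.card.choose k ≤ Fintype.card α := by
  have hsub : T.powersetCard k ⊆ univ.image fun x => {i ∈ T | x ∈ B i} := by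
    intro L hL
    obtain ⟨x, hx⟩ := h L hL
    exact mem_image.2
      ⟨x, mem_univ x, filter_mem_eq_of_mem_inf_sdiff_sup (mem_powersetCard.1 hL).1 hx⟩
  calc T.card.choose k = (T.powersetCard k).card := (card_powersetCard k T).symm
    _ ≤ (univ.image fun x => {i ∈ T | x ∈ B i}).card := card_le_card hsub
    _ ≤ Fintype.card α := card_image_le

end Separating

theorem IsCFF.choose_le {r w n t : ℕ} {B : Fin t → Finset (Fin n)} (h : IsCFF r w 1 n t B)
    (ht : r + w ≤ t) : (r + w).choose r ≤ n := by
  obtain ⟨T, -, hT⟩ := exists_subset_card_eq (s := (univ : Finset (Fin t))) (by simpa using ht)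
  have hsep : ∀ L ∈ T.powersetCard r, (L.inf B \ (T \ L).sup B).Nonempty := by
    intro L hL
    obtain ⟨hLT, hL⟩ := mem_powersetCard.1 hL
    have hcompl : (T \ L).card = w := by rw [card_sdiff_of_subset hLT, hT, hL]; omega
    exact card_pos.1 (h L (T \ L) disjoint_sdiff hL hcompl)
  simpa [hT] using choose_card_le_card_of_nonempty_inf_sdiff_sup B T r hsep

theorem exists_isCFF_two_pow (r w t : ℕ) :
    ∃ B : Fin t → Finset (Fin (2 ^ t)), IsCFF r w 1 (2 ^ t) t B := by
  let e : Finset (Fin t) ≃ Fin (2 ^ t) := Fintype.equivFinOfCardEq (by simp)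
  refine ⟨fun i => {x | i ∈ e.symm x}, fun L M hLM _ _ => one_le_card.2 ⟨e L, ?_⟩⟩
  simp only [mem_sdiff, mem_inf, mem_sup, mem_filter, mem_univ, true_and, Equiv.symm_apply_apply,
    not_exists, not_and]
  exact ⟨fun _ => id, fun _ hm hmL => disjoint_left.1 hLM hmL hm⟩

theorem cff_ge_choose_general (r w t : ℕ) (ht : r + w ≤ t) :
    (r + w).choose r ≤ Ncff r w 1 t := by
  rw [Ncff]
  split_ifs with hrw
  · rcases hrw with rfl | rfl <;> simp
  · exact le_csInf ⟨2 ^ t, exists_isCFF_two_pow r w t⟩ fun n ⟨B, hB⟩ => hB.choose_le ht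

/-- For positive integers `r, w, t` with `w ≤ r` and `t ≥ r + w`,
`N((r,w),t) ≥ C(r+w, r)`. -/
theorem cff_ge_choose (r w t : ℕ) (hw : 0 < w) (hwr : w ≤ r) (ht : r + w ≤ t) :
    (r + w).choose r ≤ Ncff r w 1 t :=
  cff_ge_choose_general r w t ht
end

section
/- Let g, h, r, w, d, t be positive integers with w ≤ r, and let 𝓕 = {(A₁,B₁), …, (A_g,B_g)} be a weakly cross-intersecting set-pairs on a ground set of cardinality h such that |A_i| ≤ r and |B_i| ≤ w for every 1 ≤ i ≤ g. If t ≥ max{h, r+w}, then N((r,w;d),t) ≥ Σ_{i=1}^g N((r−|A_i|, w−|B_i|; d), t−|A_i|−|B_i|). -/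
/-!
Take an optimal (r,w;d)-CFF with blocks `B₁, …, B_t` and embed the ground set of the set-pairs
into the block indices. Each pair `(A_i, B_i)` cuts out the cell `⋂_{A_i} B \ ⋃_{B_i} B`, and
the traces on this cell of the blocks outside `A_i ∪ B_i` form an
`(r - |A_i|, w - |B_i|; d)`-CFF with `t - |A_i| - |B_i|` blocks, so the cell has at least
`N((r - |A_i|, w - |B_i|; d), t - |A_i| - |B_i|)` points. Weak cross-intersection makes the cells
pairwise disjoint: a common index lies in `A_i` and `B_j`, so one cell is inside the block and the
other outside it.
-/

open Finset

theorem Finset.exists_disjoint_card_eq {α : Type*} [Fintype α] [DecidableEq α] {r w : ℕ}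
    (hrw : r + w ≤ Fintype.card α) :
    ∃ L M : Finset α, Disjoint L M ∧ L.card = r ∧ M.card = w := by
  obtain ⟨S, -, hS⟩ := exists_subset_card_eq (s := (univ : Finset α)) (by simpa using hrw)
  obtain ⟨L, hLS, hL⟩ := exists_subset_card_eq (s := S) (n := r) (by omega)
  exact ⟨L, S \ L, disjoint_sdiff, hL, by rw [card_sdiff_of_subset hLS]; omega⟩

theorem Finset.disjoint_inf_sdiff_sup {ι α : Type*} [BooleanAlgebra α] {B : ι → α}
    {P Q P' Q' : Finset ι} {j : ι} (hjP : j ∈ P) (hjQ' : j ∈ Q') :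
    Disjoint (P.inf B \ Q.sup B) (P'.inf B \ Q'.sup B) :=
  (disjoint_sdiff_self_right.mono_left (le_sup hjQ')).mono_left (sdiff_le.trans (inf_le hjP))

theorem sum_card_inf_sdiff_sup_le {ι κ α : Type*} [Fintype ι] [DecidableEq κ] [Fintype α]
    [DecidableEq α] (F : ι → Finset κ × Finset κ)
    (hcross : ∀ i j, i ≠ j → (((F i).1 ∩ (F j).2) ∪ ((F j).1 ∩ (F i).2)).Nonempty)
    (B : κ → Finset α) :
    ∑ i, ((F i).1.inf B \ (F i).2.sup B).card ≤ Fintype.card α := by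
  have hdisj : ((univ : Finset ι) : Set ι).PairwiseDisjoint
      fun i => (F i).1.inf B \ (F i).2.sup B := by
    intro i _ j _ hij
    obtain ⟨l, hl⟩ := hcross i j hij
    rcases mem_union.1 hl with hl | hl
    · exact disjoint_inf_sdiff_sup (mem_inter.1 hl).1 (mem_inter.1 hl).2
    · exact (disjoint_inf_sdiff_sup (mem_inter.1 hl).1 (mem_inter.1 hl).2).symm
  rw [← card_biUnion hdisj]
  exact card_le_univ _

theorem exists_isCFF (r w d t : ℕ) :
    ∃ n, ∃ B : Fin t → Finset (Fin n), IsCFF r w d n t B := by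
  -- Points are the pairs `(S, k)`, and `(S, k)` lies in block `j` iff `j ∈ S`.
  let e := Fintype.equivFin (Finset (Fin t) × Fin d)
  refine ⟨_, fun j => univ.filter fun x => j ∈ (e.symm x).1, fun L M hLM _ _ => ?_⟩
  calc d = (univ : Finset (Fin d)).card := (card_fin d).symm
    _ ≤ _ := card_le_card_of_injOn (fun k => e (L, k))
      (fun k _ => by simpa [mem_inf, mem_sup] using fun j hjM hjL => disjoint_left.1 hLM hjL hjM)
      (fun k _ k' _ h => by simpa using e.injective h)

theorem exists_isCFF_Ncff {r w : ℕ} (hr : r ≠ 0) (hw : w ≠ 0) (d t : ℕ) :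
    ∃ B : Fin t → Finset (Fin (Ncff r w d t)), IsCFF r w d (Ncff r w d t) t B := by
  unfold Ncff
  rw [if_neg (by tauto)]
  exact Nat.sInf_mem (exists_isCFF r w d t)

theorem IsCFF.le_card {r w d n t : ℕ} {B : Fin t → Finset (Fin n)} (hB : IsCFF r w d n t B)
    (hrw : r + w ≤ t) : d ≤ n := by
  obtain ⟨L, M, hLM, hL, hM⟩ := exists_disjoint_card_eq (α := Fin t) (by simpa using hrw)
  simpa using (hB L M hLM hL hM).trans (card_le_univ _)

theorem Ncff_le_of_isCFF {r w d n t : ℕ} {B : Fin t → Finset (Fin n)} (hB : IsCFF r w d n t B)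
    (hd : 0 < d) (hrw : r + w ≤ t) : Ncff r w d t ≤ n := by
  unfold Ncff
  split
  · exact hd.trans_le (hB.le_card hrw)
  · exact Nat.sInf_le ⟨B, hB⟩

theorem inf_sdiff_sup_filter {m n t : ℕ} (e : Fin m → Fin n) (B : Fin t → Finset (Fin n))
    (L M : Finset (Fin t)) :
    ((L.inf fun j => univ.filter fun y => e y ∈ B j) \
        M.sup fun j => univ.filter fun y => e y ∈ B j) =
      univ.filter fun y => e y ∈ L.inf B \ M.sup B := by
  ext y
  simp [mem_inf, mem_sup]

theorem IsCFF.restrict {r w d n t m t' : ℕ} {B : Fin t → Finset (Fin n)}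
    (hB : IsCFF r w d n t B) {P Q : Finset (Fin t)} (hPQ : Disjoint P Q)
    (hP : P.card ≤ r) (hQ : Q.card ≤ w) (ι : Fin t' ↪ Fin t) (hι : ∀ j, ι j ∉ P ∪ Q)
    (e : Fin m → Fin n) (he : ∀ x ∈ P.inf B \ Q.sup B, ∃ y, e y = x) :
    IsCFF (r - P.card) (w - Q.card) d m t' fun j => univ.filter fun y => e y ∈ B (ι j) := by
  intro L M hLM hL hM
  have hPQι (S : Finset (Fin t')) : Disjoint (P ∪ Q) (S.map ι) :=
    disjoint_right.2 fun x hx => by obtain ⟨j, -, rfl⟩ := mem_map.1 hx; exact hι j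
  have hdisj : Disjoint (P ∪ L.map ι) (Q ∪ M.map ι) := by
    simp only [disjoint_union_left, disjoint_union_right, disjoint_map]
    exact ⟨⟨hPQ, ((hPQι L).mono_left subset_union_right).symm⟩,
      (hPQι M).mono_left subset_union_left, hLM⟩
  have hcardL : (P ∪ L.map ι).card = r := by
    rw [card_union_of_disjoint ((hPQι L).mono_left subset_union_left), card_map, hL]; omega
  have hcardM : (Q ∪ M.map ι).card = w := by
    rw [card_union_of_disjoint ((hPQι M).mono_left subset_union_right), card_map, hM]; omega
  rw [inf_sdiff_sup_filter (B := fun j => B (ι j))]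
  refine (hB _ _ hdisj hcardL hcardM).trans (card_le_card_of_surjOn e fun x hx => ?_)
  rw [mem_coe, mem_sdiff, inf_union, sup_union, inf_map, sup_map] at hx
  obtain ⟨y, rfl⟩ := he x (mem_sdiff.2 ⟨mem_of_mem_inter_left hx.1,
    fun h => hx.2 (mem_union_left _ h)⟩)
  refine ⟨y, ?_, rfl⟩
  rw [mem_coe, mem_filter, mem_sdiff]
  exact ⟨mem_univ _, mem_of_mem_inter_right hx.1, fun h => hx.2 (mem_union_right _ h)⟩

theorem Ncff_le_card_inf_sdiff_sup {r w d n t : ℕ} {B : Fin t → Finset (Fin n)}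
    (hB : IsCFF r w d n t B) (hd : 0 < d) (hrw : r + w ≤ t) {P Q : Finset (Fin t)}
    (hPQ : Disjoint P Q) (hP : P.card ≤ r) (hQ : Q.card ≤ w) :
    Ncff (r - P.card) (w - Q.card) d (t - P.card - Q.card) ≤ (P.inf B \ Q.sup B).card := by
  set X := P.inf B \ Q.sup B
  have hS : (P ∪ Q)ᶜ.card = t - P.card - Q.card := by
    rw [card_compl, card_union_of_disjoint hPQ, Fintype.card_fin, Nat.sub_sub]
  have hB' := hB.restrict hPQ hP hQ ((P ∪ Q)ᶜ.orderEmbOfFin hS).toEmbedding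
    (fun j => mem_compl.1 (orderEmbOfFin_mem _ hS j)) (X.orderEmbOfFin rfl)
    (fun x hx => by rwa [← mem_coe, ← range_orderEmbOfFin X rfl] at hx)
  exact Ncff_le_of_isCFF hB' hd (by omega)

theorem cff_ge_sum_of_weakly_cross_intersecting_general (g h r w d t : ℕ)
    (hr : 0 < r) (hw : 0 < w) (hd : 0 < d)
    (F : Fin g → Finset (Fin h) × Finset (Fin h))
    (hdisj : ∀ i, Disjoint (F i).1 (F i).2)
    (hcross : ∀ i j, i ≠ j → (((F i).1 ∩ (F j).2) ∪ ((F j).1 ∩ (F i).2)).Nonempty)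
    (hA : ∀ i, (F i).1.card ≤ r) (hB : ∀ i, (F i).2.card ≤ w)
    (ht : max h (r + w) ≤ t) :
    ∑ i, Ncff (r - (F i).1.card) (w - (F i).2.card) d (t - (F i).1.card - (F i).2.card)
      ≤ Ncff r w d t := by
  obtain ⟨B, hBlocks⟩ := exists_isCFF_Ncff hr.ne' hw.ne' d t
  let emb := Fin.castLEEmb (le_of_max_le_left ht)
  have hcell (i : Fin g) : Ncff (r - (F i).1.card) (w - (F i).2.card) d
      (t - (F i).1.card - (F i).2.card) ≤
        ((F i).1.inf (B ∘ emb) \ (F i).2.sup (B ∘ emb)).card := by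
    simpa [inf_map, sup_map] using Ncff_le_card_inf_sdiff_sup hBlocks hd (le_of_max_le_right ht)
      (P := (F i).1.map emb) (Q := (F i).2.map emb) ((disjoint_map emb).2 (hdisj i))
      (by simpa using hA i) (by simpa using hB i)
  calc _ ≤ ∑ i, ((F i).1.inf (B ∘ emb) \ (F i).2.sup (B ∘ emb)).card :=
        sum_le_sum fun i _ => hcell i
    _ ≤ Fintype.card (Fin (Ncff r w d t)) := sum_card_inf_sdiff_sup_le F hcross _
    _ = Ncff r w d t := Fintype.card_fin _

/-- Main theorem: if `{(A_i, B_i)}_{i<g}` is a weakly cross-intersecting set-pairs on a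
ground set of size `h` with `|A_i| ≤ r`, `|B_i| ≤ w`, and `t ≥ max{h, r+w}`, then
`N((r,w;d),t) ≥ Σ_i N((r−|A_i|, w−|B_i|; d), t−|A_i|−|B_i|)`. -/
theorem cff_ge_sum_of_weakly_cross_intersecting (g h r w d t : ℕ)
    (hg : 0 < g) (hh : 0 < h) (hr : 0 < r) (hw : 0 < w) (hwr : w ≤ r) (hd : 0 < d)
    (F : Fin g → Finset (Fin h) × Finset (Fin h))
    (hdisj : ∀ i, Disjoint (F i).1 (F i).2)
    (hcross : ∀ i j, i ≠ j → (((F i).1 ∩ (F j).2) ∪ ((F j).1 ∩ (F i).2)).Nonempty)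
    (hA : ∀ i, (F i).1.card ≤ r) (hB : ∀ i, (F i).2.card ≤ w)
    (ht : max h (r + w) ≤ t) :
    ∑ i, Ncff (r - (F i).1.card) (w - (F i).2.card) d (t - (F i).1.card - (F i).2.card)
      ≤ Ncff r w d t :=
  cff_ge_sum_of_weakly_cross_intersecting_general g h r w d t hr hw hd F hdisj hcross hA hB ht
end

section
/- For all positive integers r, w, d, s, t with w ≤ r, 0 < s ≤ r + w and t ≥ r + w, it holds that N((r,w;d),t) ≥ Σ_i C(s,i) · N((r−i, w−s+i; d), t−s), where the sum runs over all integers i with max(0, s−w) ≤ i ≤ min(r, s) and C(·,·) denotes the binomial coefficient. -/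
/-!
Fix a set `A` of `s` blocks and sort the points by their pattern `S ⊆ A`, the set of blocks of
`A` containing them. Given disjoint sets `L'`, `M'` of the other `t - s` blocks, of sizes
`r - |S|` and `w - (s - |S|)`, the at least `d` points lying in every block of `L' ∪ S` and in
no block of `M' ∪ (A \ S)` all have pattern `S`. So the other blocks, restricted to the class of
pattern `S`, form an `(r - |S|, w - (s - |S|); d)`-CFF, and the class has at least
`N((r - |S|, w - s + |S|; d), t - s)` points; summing over the `C(s, i)` patterns of each
admissible size `i` gives the bound. Since `d > 0`, this holds also for the degenerate classes,
where the convention `N = 1` applies.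
-/

open Finset

variable {ι κ α β : Type*} [Fintype α] [DecidableEq α] [Fintype β] [DecidableEq β]

def CoverFree (r w d : ℕ) (B : ι → Finset α) : Prop :=
  ∀ L M : Finset ι, Disjoint L M → #L = r → #M = w → d ≤ #(L.inf B \ M.sup B)

def patternClass [DecidableEq ι] (B : ι → Finset α) (A S : Finset ι) : Finset α :=
  univ.filter fun x => A.filter (x ∈ B ·) = S

def patternRestrict [DecidableEq ι] (B : ι → Finset α) (A S : Finset ι) (i : {i // i ∉ A}) :
    Finset (patternClass B A S) :=
  (B i).subtype (· ∈ patternClass B A S)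

theorem card_eq_sum_card_patternClass [DecidableEq ι] (B : ι → Finset α) (A : Finset ι) :
    Fintype.card α = ∑ S ∈ A.powerset, #(patternClass B A S) := by
  rw [← card_univ]
  exact card_eq_sum_card_fiberwise fun x _ => mem_powerset.mpr (filter_subset _ _)

theorem coverFree_filter_mem_fst [Fintype ι] [DecidableEq ι] (r w d : ℕ) :
    CoverFree r w d fun j : ι => univ.filter fun p : Finset ι × Fin d => j ∈ p.1 := by
  intro L M hLM _ _
  calc d = #({L} ×ˢ (univ : Finset (Fin d))) := by simp
    _ ≤ _ := card_le_card fun p hp => by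
        obtain ⟨hpL, -⟩ := mem_product.mp hp
        simp only [mem_singleton] at hpL
        simpa [mem_inf, mem_sup, hpL] using fun m hm => disjoint_right.mp hLM hm

namespace CoverFree

variable {r w d : ℕ} {B : ι → Finset α}

theorem comp_embedding (hB : CoverFree r w d B) (e : κ ↪ ι) : CoverFree r w d (B ∘ e) := by
  intro L M hLM hL hM
  simpa [inf_map, sup_map] using
    hB (L.map e) (M.map e) ((disjoint_map e).mpr hLM) (by simpa using hL) (by simpa using hM)

theorem comap_of_surjective (hB : CoverFree r w d B) {f : β → α} (hf : f.Surjective) :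
    CoverFree r w d fun i => univ.filter (f · ∈ B i) := by
  intro L M hLM hL hM
  have hpre : (L.inf fun i => univ.filter (f · ∈ B i)) \ (M.sup fun i => univ.filter (f · ∈ B i))
      = univ.filter (f · ∈ L.inf B \ M.sup B) := by
    ext y
    simp [mem_inf, mem_sup]
  rw [hpre]
  refine (hB L M hLM hL hM).trans (card_le_card_of_surjOn f fun x hx => ?_)
  obtain ⟨y, rfl⟩ := hf x
  exact ⟨y, mem_filter.mpr ⟨mem_univ y, hx⟩, rfl⟩

theorem card_pos [Fintype ι] (hB : CoverFree r w d B) (hd : 0 < d)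
    (hrw : r + w ≤ Fintype.card ι) : 0 < Fintype.card α := by
  classical
  obtain ⟨T, -, hT⟩ := exists_subset_card_eq (s := (univ : Finset ι)) (n := r + w) (by simpa)
  obtain ⟨L, hLT, hL⟩ := exists_subset_card_eq (s := T) (n := r) (by omega)
  have hD := hB L (T \ L) disjoint_sdiff hL (by rw [card_sdiff_of_subset hLT]; omega)
  exact hd.trans_le (hD.trans (card_le_univ _))

theorem ncff_le_card {t : ℕ} {B : Fin t → Finset α} (hB : CoverFree r w d B) (hd : 0 < d)
    (hrw : r + w ≤ t) : Ncff r w d t ≤ Fintype.card α := by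
  rw [Ncff]
  split_ifs
  · exact hB.card_pos hd (by simpa)
  · exact Nat.sInf_le ⟨_, hB.comap_of_surjective (Fintype.equivFin α).symm.surjective⟩

theorem restrict [DecidableEq ι] (hB : CoverFree r w d B) {A S : Finset ι} (hSA : S ⊆ A)
    (hr : #S ≤ r) (hw : #A - #S ≤ w) :
    CoverFree (r - #S) (w - (#A - #S)) d (patternRestrict B A S) := by
  intro L' M' hLM' hL' hM'
  let L := S ∪ L'.map (Function.Embedding.subtype _)
  let M := (A \ S) ∪ M'.map (Function.Embedding.subtype _)
  have hmap_disjoint : ∀ (T : Finset ι) (U : Finset {i // i ∉ A}), T ⊆ A →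
      Disjoint T (U.map (Function.Embedding.subtype _)) := by
    intro T U hT
    refine disjoint_right.mpr fun i hi hiT => ?_
    obtain ⟨⟨i, hiA⟩, -, rfl⟩ := mem_map.mp hi
    exact hiA (hT hiT)
  have hLM : Disjoint L M := disjoint_union_left.mpr
    ⟨disjoint_union_right.mpr ⟨disjoint_sdiff, hmap_disjoint _ _ hSA⟩,
     disjoint_union_right.mpr ⟨(hmap_disjoint _ _ sdiff_subset).symm, (disjoint_map _).mpr hLM'⟩⟩
  have hL : #L = r := by
    rw [card_union_of_disjoint (hmap_disjoint _ _ hSA), card_map]; omega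
  have hM : #M = w := by
    rw [card_union_of_disjoint (hmap_disjoint _ _ sdiff_subset), card_map,
      card_sdiff_of_subset hSA]; omega
  set D := L.inf B \ M.sup B
  have hD : ∀ x ∈ D, (∀ i ∈ L, x ∈ B i) ∧ ∀ i ∈ M, x ∉ B i := fun x hx => by
    simpa only [D, mem_sdiff, mem_inf, mem_sup, not_exists, not_and] using hx
  have hDP : ∀ x ∈ D, x ∈ patternClass B A S := by
    intro x hx
    refine mem_filter.mpr ⟨mem_univ x, ext fun a => ⟨fun ha => ?_, fun ha => ?_⟩⟩
    · obtain ⟨haA, hxa⟩ := mem_filter.mp ha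
      by_contra haS
      exact (hD x hx).2 a (mem_union_left _ (mem_sdiff.mpr ⟨haA, haS⟩)) hxa
    · exact mem_filter.mpr ⟨hSA ha, (hD x hx).1 a (mem_union_left _ ha)⟩
  calc d ≤ #D := hB L M hLM hL hM
    _ = #(D.subtype (· ∈ patternClass B A S)) := by rw [card_subtype, filter_true_of_mem hDP]
    _ ≤ #(L'.inf (patternRestrict B A S) \ M'.sup (patternRestrict B A S)) := by
        refine card_le_card fun x hx => ?_
        obtain ⟨hxL, hxM⟩ := hD x (mem_subtype.mp hx)
        simp only [mem_sdiff, mem_inf, mem_sup, patternRestrict, mem_subtype, not_exists, not_and]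
        exact ⟨fun i hi => hxL i (mem_union_right _ (mem_map_of_mem _ hi)),
          fun i hi => hxM i (mem_union_right _ (mem_map_of_mem _ hi))⟩

theorem ncff_le_card_patternClass [Fintype ι] [DecidableEq ι] (hB : CoverFree r w d B)
    (hd : 0 < d) (hrw : r + w ≤ Fintype.card ι) {A S : Finset ι} (hSA : S ⊆ A) (hr : #S ≤ r)
    (hw : #A - #S ≤ w) :
    Ncff (r - #S) (w - (#A - #S)) d (Fintype.card ι - #A) ≤ #(patternClass B A S) := by
  have hcompl : Fintype.card {i // i ∉ A} = Fintype.card ι - #A := by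
    simp [Fintype.card_subtype_compl]
  have hA := card_le_univ A
  simpa using ((hB.restrict hSA hr hw).comp_embedding
    (Fintype.equivFinOfCardEq hcompl).symm.toEmbedding).ncff_le_card hd (by omega)

theorem sum_le_card [Fintype ι] [DecidableEq ι] (hB : CoverFree r w d B) (hd : 0 < d)
    (hrw : r + w ≤ Fintype.card ι) (A : Finset ι) :
    ∑ i ∈ Icc (#A - w) (min r #A), (#A).choose i * Ncff (r - i) (w - (#A - i)) d
      (Fintype.card ι - #A) ≤ Fintype.card α := by
  calc _ = ∑ i ∈ Icc (#A - w) (min r #A), ∑ S ∈ powersetCard i A,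
          Ncff (r - #S) (w - (#A - #S)) d (Fintype.card ι - #A) := by
        refine sum_congr rfl fun i _ => ?_
        rw [sum_congr rfl fun S hS => by rw [(mem_powersetCard.mp hS).2], sum_const,
          card_powersetCard, smul_eq_mul]
    _ ≤ ∑ i ∈ Icc (#A - w) (min r #A), ∑ S ∈ powersetCard i A, #(patternClass B A S) :=
        sum_le_sum fun i hi => sum_le_sum fun S hS => by
          obtain ⟨hSA, rfl⟩ := mem_powersetCard.mp hS
          have := mem_Icc.mp hi
          exact hB.ncff_le_card_patternClass hd hrw hSA (by omega) (by omega)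
    _ ≤ ∑ i ∈ range (#A + 1), ∑ S ∈ powersetCard i A, #(patternClass B A S) :=
        sum_le_sum_of_subset fun i hi => by
          rw [mem_Icc] at hi
          rw [mem_range]
          omega
    _ = Fintype.card α := by rw [← sum_powerset, card_eq_sum_card_patternClass B A]

end CoverFree

theorem exists_coverFree_ncff {r w : ℕ} (hr : r ≠ 0) (hw : w ≠ 0) (d t : ℕ) :
    ∃ B : Fin t → Finset (Fin (Ncff r w d t)), CoverFree r w d B := by
  rw [Ncff, if_neg (by tauto)]
  exact Nat.sInf_mem (s := {n | ∃ B : Fin t → Finset (Fin n), IsCFF r w d n t B})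
    ⟨_, _, (coverFree_filter_mem_fst r w d).comap_of_surjective
      (Fintype.equivFin _).symm.surjective⟩

theorem cff_recursive_bound_first_general (r w d s t : ℕ)
    (hr : 0 < r) (hw : 0 < w) (hd : 0 < d)
    (hsrw : s ≤ r + w) (ht : r + w ≤ t) :
    ∑ i ∈ Finset.Icc (s - w) (min r s), s.choose i * Ncff (r - i) (w - (s - i)) d (t - s)
      ≤ Ncff r w d t := by
  obtain ⟨B, hB⟩ := exists_coverFree_ncff hr.ne' hw.ne' d t
  obtain ⟨A, -, rfl⟩ := exists_subset_card_eq (s := (univ : Finset (Fin t))) (n := s)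
    (by rw [card_univ, Fintype.card_fin]; omega)
  simpa using hB.sum_le_card hd (by simpa using ht) A

/-- For positive integers `r, w, d, s, t` with `w ≤ r`, `0 < s ≤ r + w` and `t ≥ r + w`,
`N((r,w;d),t) ≥ Σ_{max(0,s−w) ≤ i ≤ min(r,s)} C(s,i) · N((r−i, w−s+i; d), t−s)`. -/
theorem cff_recursive_bound_first (r w d s t : ℕ)
    (hr : 0 < r) (hw : 0 < w) (hwr : w ≤ r) (hd : 0 < d)
    (hs : 0 < s) (hsrw : s ≤ r + w) (ht : r + w ≤ t) :
    ∑ i ∈ Finset.Icc (s - w) (min r s), s.choose i * Ncff (r - i) (w - (s - i)) d (t - s)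
      ≤ Ncff r w d t :=
  cff_recursive_bound_first_general r w d s t hr hw hd hsrw ht
end

section
/- Let i, j, r, w, d be positive integers with 1 ≤ i ≤ r−1 and 1 ≤ j ≤ w−1, and suppose there exists an (i,j)-weakly cross-intersecting set-pairs of size g on a ground set of cardinality h. Then for every integer t ≥ max{h, r+w}, N((r,w;d),t) ≥ g · N((r−i, w−j; d), t−i−j). -/
/-!
Place the `g` set-pairs `(A_k, S_k)` among the block indices of an `(r,w;d)`-CFF `B` on `n`
points, and let `X_k` be the set of points lying in every block of `A_k` and in no block of
`S_k`. Weak cross-intersection makes the `X_k` pairwise disjoint, and the blocks indexed outside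
`A_k ∪ S_k`, traced on `X_k`, form an `(r-i, w-j; d)`-CFF with `t-i-j` blocks. Hence each `X_k`
has at least `N((r-i, w-j; d), t-i-j)` points, and `n ≥ g · N((r-i, w-j; d), t-i-j)`.
-/
open Finset

section Transport

variable {r w d t : ℕ} {α : Type*} [Fintype α] [DecidableEq α]

theorem exists_isCFF_of_forall_le_card_inter (Y : Finset α) (B : Fin t → Finset α)
    (hB : ∀ L M : Finset (Fin t), Disjoint L M → #L = r → #M = w →
      d ≤ #((L.inf B \ M.sup B) ∩ Y)) :
    ∃ C : Fin t → Finset (Fin #Y), IsCFF r w d #Y t C := by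
  let e : Y ↪ Fin #Y := Y.equivFin.toEmbedding
  refine ⟨fun k => ((B k).subtype (· ∈ Y)).map e, fun L M hLM hL hM => ?_⟩
  have hrestrict : L.inf (fun k => ((B k).subtype (· ∈ Y)).map e) \
      M.sup (fun k => ((B k).subtype (· ∈ Y)).map e) =
        ((L.inf B \ M.sup B).subtype (· ∈ Y)).map e := by
    ext p
    obtain ⟨y, rfl⟩ := Y.equivFin.surjective p
    simp [e, mem_inf, mem_sup]
  rw [hrestrict, card_map, card_subtype, filter_mem_eq_inter]
  exact hB L M hLM hL hM

theorem ncff_le_card_of_forall_le_card_inter (hr : r ≠ 0) (hw : w ≠ 0) (Y : Finset α)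
    (B : Fin t → Finset α)
    (hB : ∀ L M : Finset (Fin t), Disjoint L M → #L = r → #M = w →
      d ≤ #((L.inf B \ M.sup B) ∩ Y)) :
    Ncff r w d t ≤ #Y := by
  rw [Ncff, if_neg (by tauto)]
  exact Nat.sInf_le (exists_isCFF_of_forall_le_card_inter Y B hB)

end Transport

theorem exists_isCFF_card_eq_ncff {r w d t : ℕ} (hr : r ≠ 0) (hw : w ≠ 0) :
    ∃ B : Fin t → Finset (Fin (Ncff r w d t)), IsCFF r w d (Ncff r w d t) t B := by
  rw [Ncff, if_neg (by tauto)]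
  exact Nat.sInf_mem (exists_isCFF r w d t)

theorem Finset.inter_sdiff_union_eq_sdiff_inter_sdiff {α : Type*} [DecidableEq α]
    (a b c e : Finset α) :
    (a ∩ b) \ (c ∪ e) = (a \ c) ∩ (b \ e) := by
  ext; simp only [mem_sdiff, mem_inter, mem_union]; tauto

theorem ncff_le_card_inf_sdiff_sup {r w d n t : ℕ} {B : Fin t → Finset (Fin n)}
    (hB : IsCFF r w d n t B) {A S : Finset (Fin t)} (hAS : Disjoint A S) (hA : #A < r)
    (hS : #S < w) :
    Ncff (r - #A) (w - #S) d (t - #A - #S) ≤ #(A.inf B \ S.sup B) := by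
  have hC : #(A ∪ S)ᶜ = t - #A - #S := by
    rw [card_compl, card_union_of_disjoint hAS, Fintype.card_fin, Nat.sub_sub]
  let ι : Fin (t - #A - #S) ↪ Fin t := ((A ∪ S)ᶜ.orderEmbOfFin hC).toEmbedding
  have hι : ∀ L : Finset (Fin (t - #A - #S)), Disjoint (L.map ι) (A ∪ S) := fun L =>
    disjoint_left.mpr fun x hx => by
      obtain ⟨m, -, rfl⟩ := mem_map.mp hx
      exact mem_compl.mp (orderEmbOfFin_mem _ hC m)
  refine ncff_le_card_of_forall_le_card_inter (by omega) (by omega) _ (B ∘ ι)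
    fun L M hLM hL hM => ?_
  have hdisj : Disjoint (L.map ι ∪ A) (M.map ι ∪ S) := by
    simp only [disjoint_union_left, disjoint_union_right] at hι ⊢
    exact ⟨⟨(disjoint_map ι).mpr hLM, (hι M).1.symm⟩, (hι L).2, hAS⟩
  have hLA : #(L.map ι ∪ A) = r := by
    rw [card_union_of_disjoint (disjoint_union_right.mp (hι L)).1, card_map]; omega
  have hMS : #(M.map ι ∪ S) = w := by
    rw [card_union_of_disjoint (disjoint_union_right.mp (hι M)).2, card_map]; omega
  have := hB _ _ hdisj hLA hMS
  rwa [inf_union, sup_union, inf_map, sup_map, inf_eq_inter, sup_eq_union,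
    inter_sdiff_union_eq_sdiff_inter_sdiff] at this

theorem Finset.disjoint_inf_sdiff_sup_of_inter_nonempty {ι α : Type*} [DecidableEq ι]
    [Fintype α] [DecidableEq α] (B : ι → Finset α) {A S A' S' : Finset ι}
    (h : (A ∩ S').Nonempty) : Disjoint (A.inf B \ S.sup B) (A'.inf B \ S'.sup B) := by
  obtain ⟨a, ha⟩ := h
  refine disjoint_left.mpr fun x hx hx' => (mem_sdiff.mp hx').2 ?_
  obtain ⟨haA, haS'⟩ := mem_inter.mp ha
  exact mem_sup.mpr ⟨a, haS', mem_inf.mp (mem_sdiff.mp hx).1 a haA⟩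

theorem Finset.card_mul_le_card_biUnion {ι α : Type*} [DecidableEq α] (s : Finset ι)
    (f : ι → Finset α) (hf : (s : Set ι).PairwiseDisjoint f) {m : ℕ}
    (hm : ∀ i ∈ s, m ≤ #(f i)) :
    #s * m ≤ #(s.biUnion f) := by
  rw [card_biUnion hf]
  exact card_nsmul_le_sum s _ m hm

theorem mul_ncff_le_of_isCFF {r w d n t g i j : ℕ} {B : Fin t → Finset (Fin n)}
    (hB : IsCFF r w d n t B) (A S : Fin g → Finset (Fin t)) (hAS : ∀ k, Disjoint (A k) (S k))
    (hcross : ∀ k l, k ≠ l → ((A k ∩ S l) ∪ (A l ∩ S k)).Nonempty)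
    (hA : ∀ k, #(A k) = i) (hS : ∀ k, #(S k) = j) (hir : i < r) (hjw : j < w) :
    g * Ncff (r - i) (w - j) d (t - i - j) ≤ n := by
  have hdisj : ((univ : Finset (Fin g)) : Set (Fin g)).PairwiseDisjoint
      fun k => (A k).inf B \ (S k).sup B := by
    intro k _ l _ hkl
    rcases union_nonempty.mp (hcross k l hkl) with h | h
    · exact disjoint_inf_sdiff_sup_of_inter_nonempty B h
    · exact (disjoint_inf_sdiff_sup_of_inter_nonempty B h).symm
  have hX : ∀ k ∈ univ, Ncff (r - i) (w - j) d (t - i - j) ≤ #((A k).inf B \ (S k).sup B) :=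
    fun k _ => by
      simpa only [hA, hS] using
        ncff_le_card_inf_sdiff_sup hB (hAS k) (by rwa [hA]) (by rwa [hS])
  calc g * Ncff (r - i) (w - j) d (t - i - j)
      = #(univ : Finset (Fin g)) * Ncff (r - i) (w - j) d (t - i - j) := by
        rw [card_univ, Fintype.card_fin]
    _ ≤ #(univ.biUnion fun k => (A k).inf B \ (S k).sup B) :=
        card_mul_le_card_biUnion univ _ hdisj hX
    _ ≤ n := (card_le_univ _).trans_eq (Fintype.card_fin n)

theorem cff_ge_mul_of_ij_weakly_cross_intersecting_general (i j r w d g h : ℕ)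
    (hr : 0 < r) (hw : 0 < w) (hir : i ≤ r - 1) (hjw : j ≤ w - 1)
    (F : Fin g → Finset (Fin h) × Finset (Fin h))
    (hdisj : ∀ k, Disjoint (F k).1 (F k).2)
    (hcross : ∀ k l, k ≠ l → (((F k).1 ∩ (F l).2) ∪ ((F l).1 ∩ (F k).2)).Nonempty)
    (hA : ∀ k, (F k).1.card = i) (hB : ∀ k, (F k).2.card = j)
    (t : ℕ) (ht : max h (r + w) ≤ t) :
    g * Ncff (r - i) (w - j) d (t - i - j) ≤ Ncff r w d t := by
  obtain ⟨C, hC⟩ := exists_isCFF_card_eq_ncff (d := d) (t := t) hr.ne' hw.ne'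
  let ι : Fin h ↪ Fin t := Fin.castLEEmb (le_of_max_le_left ht)
  refine mul_ncff_le_of_isCFF hC (fun k => (F k).1.map ι) (fun k => (F k).2.map ι)
    (fun k => (disjoint_map ι).mpr (hdisj k)) (fun k l hkl => ?_) (by simp [hA]) (by simp [hB])
    (by omega) (by omega)
  simpa only [map_inter, map_union] using (hcross k l hkl).map (f := ι)

/-- If there exists an `(i,j)`-weakly cross-intersecting set-pairs of size `g` on a
ground set of cardinality `h`, with `1 ≤ i ≤ r−1` and `1 ≤ j ≤ w−1`, then for every
`t ≥ max{h, r+w}`, `N((r,w;d),t) ≥ g · N((r−i, w−j; d), t−i−j)`. -/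
theorem cff_ge_mul_of_ij_weakly_cross_intersecting (i j r w d g h : ℕ)
    (hr : 0 < r) (hw : 0 < w) (hd : 0 < d) (hg : 0 < g) (hh : 0 < h)
    (hi1 : 1 ≤ i) (hir : i ≤ r - 1) (hj1 : 1 ≤ j) (hjw : j ≤ w - 1)
    (F : Fin g → Finset (Fin h) × Finset (Fin h))
    (hdisj : ∀ k, Disjoint (F k).1 (F k).2)
    (hcross : ∀ k l, k ≠ l → (((F k).1 ∩ (F l).2) ∪ ((F l).1 ∩ (F k).2)).Nonempty)
    (hA : ∀ k, (F k).1.card = i) (hB : ∀ k, (F k).2.card = j)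
    (t : ℕ) (ht : max h (r + w) ≤ t) :
    g * Ncff (r - i) (w - j) d (t - i - j) ≤ Ncff r w d t :=
  cff_ge_mul_of_ij_weakly_cross_intersecting_general i j r w d g h hr hw hir hjw F hdisj hcross hA
    hB t ht
end

section
/- Let c > 0 be a real constant such that N((r,1),t) ≥ c · (r² / log r) · log t for all integers r ≥ 2 and t ≥ r + 1 (log denoting the natural logarithm). Then for all positive integers r, w, t with r ≥ w, r ≥ 2 and t ≥ r + w, it holds that N((r,w),t) ≥ c · ((C(r+w, w+1) + C(r+w−1, w+1) + 3·C(r+w−4, w−2)) / log r) · log(t−w+1), where C(·,·) denotes the binomial coefficient (equal to 0 when the lower index is negative or exceeds the upper index). -/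
/-!
Removing the last block `K` from an `(r, w)`-cover-free family with `t` blocks leaves an
`(r - 1, w)`-cover-free family on the points of `K` and an `(r, w - 1)`-cover-free family on
the points outside `K`, whence `N((r,w),t) ≥ N((r,w-1),t-1) + N((r-1,w),t-1)`.
The coefficient `C(r+w,w+1) + C(r+w-1,w+1) + 3 C(r+w-4,w-2)` obeys the same Pascal-type
recursion and equals `r²` for `w = 1`, so the bound follows by induction on `r + w` from the
case `w = 1`. Passing from `(r, t)` to `(r - 1, t - 1)` does not decrease the factor
`log (t - w + 1) / log r`, and on the diagonal `w = r`, where the induction hypothesis does not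
apply to `(r - 1, r)`, complementing the blocks gives `N((r-1,r),t) = N((r,r-1),t)`.
-/

open Finset Real

section CoverFree

variable {ι κ α β : Type*} [Fintype α] [DecidableEq α] [Fintype β] [DecidableEq β]
  {r w : ℕ} {B : ι → Finset α}

def IsCoverFree (r w : ℕ) (B : ι → Finset α) : Prop :=
  ∀ L M : Finset ι, Disjoint L M → #L = r → #M = w → (L.inf B \ M.sup B).Nonempty

theorem isCFF_one_iff_s12 {n t : ℕ} {B : Fin t → Finset (Fin n)} :
    IsCFF r w 1 n t B ↔ IsCoverFree r w B := by
  simp only [IsCFF, IsCoverFree, one_le_card]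

theorem mem_inf_sdiff_sup {L M : Finset ι} {x : α} :
    x ∈ L.inf B \ M.sup B ↔ (∀ i ∈ L, x ∈ B i) ∧ ∀ i ∈ M, x ∉ B i := by
  simp only [mem_sdiff, mem_inf, mem_sup, not_exists, not_and]

theorem IsCoverFree.compl (h : IsCoverFree r w B) :
    IsCoverFree w r fun i => (B i)ᶜ := by
  intro L M hLM hL hM
  obtain ⟨x, hx⟩ := h M L hLM.symm hM hL
  refine ⟨x, ?_⟩
  simp only [mem_inf_sdiff_sup, mem_compl, not_not] at hx ⊢
  exact hx.symm

theorem IsCoverFree.map_equiv (h : IsCoverFree r w B) (e : α ≃ β) :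
    IsCoverFree r w fun i => (B i).map e.toEmbedding := by
  intro L M hLM hL hM
  obtain ⟨x, hx⟩ := h L M hLM hL hM
  refine ⟨e x, ?_⟩
  simpa only [mem_inf_sdiff_sup, mem_map_equiv, Equiv.symm_apply_apply] using hx

theorem isCoverFree_powerset [Fintype ι] [DecidableEq ι] :
    IsCoverFree r w fun i : ι => ({S | i ∈ S} : Finset (Finset ι)) := by
  intro L M hLM _ _
  refine ⟨L, ?_⟩
  simp only [mem_inf_sdiff_sup, mem_filter, mem_univ, true_and]
  exact ⟨fun _ hi => hi, fun _ hi hiL => disjoint_left.mp hLM hiL hi⟩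

variable [DecidableEq ι] {j : ι} {e : κ ↪ ι}

theorem IsCoverFree.restrict_mem (h : IsCoverFree (r + 1) w B) (hj : ∀ k, e k ≠ j) :
    IsCoverFree r w fun k => (B (e k)).subtype (· ∈ B j) := by
  intro L M hLM hL hM
  have hjL : j ∉ L.map e := by simp [hj]
  have hjM : j ∉ M.map e := by simp [hj]
  obtain ⟨x, hx⟩ := h (insert j (L.map e)) (M.map e)
    (disjoint_insert_left.mpr ⟨hjM, (disjoint_map e).mpr hLM⟩)
    (by rw [card_insert_of_notMem hjL, card_map, hL]) (by rw [card_map, hM])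
  simp only [mem_inf_sdiff_sup, forall_mem_insert, forall_mem_map] at hx
  refine ⟨⟨x, hx.1.1⟩, ?_⟩
  simpa only [mem_inf_sdiff_sup, mem_subtype] using ⟨hx.1.2, hx.2⟩

theorem IsCoverFree.restrict_notMem (h : IsCoverFree r (w + 1) B) (hj : ∀ k, e k ≠ j) :
    IsCoverFree r w fun k => (B (e k)).subtype (· ∉ B j) := by
  intro L M hLM hL hM
  have hjL : j ∉ L.map e := by simp [hj]
  have hjM : j ∉ M.map e := by simp [hj]
  obtain ⟨x, hx⟩ := h (L.map e) (insert j (M.map e))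
    (disjoint_insert_right.mpr ⟨hjL, (disjoint_map e).mpr hLM⟩)
    (by rw [card_map, hL]) (by rw [card_insert_of_notMem hjM, card_map, hM])
  simp only [mem_inf_sdiff_sup, forall_mem_insert, forall_mem_map] at hx
  refine ⟨⟨x, hx.2.1⟩, ?_⟩
  simpa only [mem_inf_sdiff_sup, mem_subtype] using ⟨hx.1, hx.2.2⟩

end CoverFree

section Ncff

variable {r w t : ℕ}

theorem Ncff_eq_sInf (hr : r ≠ 0) (hw : w ≠ 0) :
    Ncff r w 1 t = sInf {n | ∃ B : Fin t → Finset (Fin n), IsCoverFree r w B} := by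
  simp only [Ncff, hr, hw, or_self, if_false, isCFF_one_iff_s12]

theorem Ncff_le_card {α : Type*} [Fintype α] [DecidableEq α] (hr : r ≠ 0) (hw : w ≠ 0)
    {B : Fin t → Finset α} (h : IsCoverFree r w B) : Ncff r w 1 t ≤ Fintype.card α := by
  rw [Ncff_eq_sInf hr hw]
  exact Nat.sInf_le ⟨_, h.map_equiv (Fintype.equivFin α)⟩

theorem exists_isCoverFree_Ncff (hr : r ≠ 0) (hw : w ≠ 0) :
    ∃ B : Fin t → Finset (Fin (Ncff r w 1 t)), IsCoverFree r w B := by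
  have hne : {n | ∃ B : Fin t → Finset (Fin n), IsCoverFree r w B}.Nonempty :=
    ⟨_, _, isCoverFree_powerset.map_equiv (Fintype.equivFin _)⟩
  rw [Ncff_eq_sInf hr hw]
  exact Nat.sInf_mem hne

theorem Ncff_comm (r w t : ℕ) : Ncff r w 1 t = Ncff w r 1 t := by
  rcases eq_or_ne r 0 with rfl | hr
  · simp [Ncff]
  rcases eq_or_ne w 0 with rfl | hw
  · simp [Ncff]
  have hle {a b : ℕ} (ha : a ≠ 0) (hb : b ≠ 0) : Ncff b a 1 t ≤ Ncff a b 1 t := by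
    obtain ⟨B, hB⟩ := exists_isCoverFree_Ncff (t := t) ha hb
    simpa using Ncff_le_card hb ha hB.compl
  exact le_antisymm (hle hw hr) (hle hr hw)

theorem Ncff_add_le_Ncff_succ (hr : r ≠ 0) (hw : w ≠ 0) :
    Ncff (r + 1) w 1 t + Ncff r (w + 1) 1 t ≤ Ncff (r + 1) (w + 1) 1 (t + 1) := by
  obtain ⟨B, hB⟩ := exists_isCoverFree_Ncff (t := t + 1) r.add_one_ne_zero w.add_one_ne_zero
  have hj : ∀ k : Fin t, Fin.castSuccEmb k ≠ Fin.last t := fun k => (Fin.castSucc_lt_last k).ne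
  have hout := Ncff_le_card r.add_one_ne_zero hw (hB.restrict_notMem hj)
  have hin := Ncff_le_card hr w.add_one_ne_zero (hB.restrict_mem hj)
  have hsplit : Fintype.card {x // x ∈ B (Fin.last t)} + Fintype.card {x // x ∉ B (Fin.last t)}
      = Ncff (r + 1) (w + 1) 1 (t + 1) := by
    rw [← Fintype.card_sum, Fintype.card_congr (Equiv.sumCompl _), Fintype.card_fin]
  omega

end Ncff

def cffCoeff (r w : ℕ) : ℕ :=
  (r + w).choose (w + 1) + (r + w - 1).choose (w + 1)
    + 3 * if 2 ≤ w then (r + w - 4).choose (w - 2) else 0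

theorem cffCoeff_one (r : ℕ) : cffCoeff r 1 = r ^ 2 := by
  simp only [cffCoeff, Nat.add_sub_cancel, if_neg (by omega : ¬ 2 ≤ 1), mul_zero, add_zero]
  induction r with
  | zero => rfl
  | succ r ih =>
    simp only [Nat.choose_succ_succ', Nat.choose_one_right, Nat.choose_zero_right, zero_add]
      at ih ⊢
    nlinarith

theorem cffCoeff_pascal {r w : ℕ} (hr : r ≠ 0) (hw : w ≠ 0) :
    cffCoeff (r + 1) (w + 1) = cffCoeff (r + 1) w + cffCoeff r (w + 1) := by
  obtain ⟨a, rfl⟩ := Nat.exists_eq_add_one_of_ne_zero hr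
  obtain ⟨b, rfl⟩ := Nat.exists_eq_add_one_of_ne_zero hw
  rcases b with _ | b <;> simp +arith [cffCoeff, Nat.choose_succ_succ']

theorem choose_succ_le_choose {n k : ℕ} (h : n ≤ 2 * k + 1) :
    n.choose (k + 1) ≤ n.choose k := by
  refine Nat.le_of_mul_le_mul_right ?_ k.succ_pos
  rw [Nat.choose_succ_right_eq]
  exact Nat.mul_le_mul_left _ (by omega)

theorem cffCoeff_le_cffCoeff_swap (r : ℕ) : cffCoeff r (r + 1) ≤ cffCoeff (r + 1) r := by
  rcases r with _ | _ | r
  · decide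
  · decide
  · have h₁ : (2 * r + 1).choose (r + 1) ≤ (2 * r + 1).choose r :=
      choose_succ_le_choose (by omega)
    have h₂ : (2 * r + 4).choose (r + 4) ≤ (2 * r + 4).choose (r + 3) :=
      choose_succ_le_choose (by omega)
    have h₃ : (2 * r + 5).choose (r + 4) ≤ (2 * r + 5).choose (r + 3) :=
      choose_succ_le_choose (by omega)
    simp +arith only [cffCoeff, Nat.add_one_sub_one, le_add_iff_nonneg_left, zero_le,
      ↓reduceIte, Nat.reduceSubDiff, add_tsub_cancel_right, ge_iff_le]
    omega

theorem log_add_one_div_log_add_one_le {a x : ℝ} (ha : 1 < a) (hax : a ≤ x) :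
    log (x + 1) / log (a + 1) ≤ log x / log a := by
  have ha₀ : 0 < a := by linarith
  have hx₀ : 0 < x := by linarith
  have hloga : 0 < log a := log_pos ha
  have hlogx : log a ≤ log x := log_le_log ha₀ hax
  have hinc : log (x + 1) - log x ≤ log (a + 1) - log a := by
    rw [← log_div (by linarith) hx₀.ne', ← log_div (by linarith) ha₀.ne']
    apply log_le_log (by positivity)
    rw [div_le_div_iff₀ hx₀ ha₀]
    linarith
  have hinc₀ : 0 ≤ log (a + 1) - log a := by
    have := log_le_log ha₀ (by linarith : a ≤ a + 1); linarith
  rw [div_le_div_iff₀ (log_pos (by linarith)) hloga]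
  nlinarith [mul_le_mul hinc hlogx hloga.le hinc₀]

theorem le_Ncff_of_le_Ncff_one {c : ℝ} (hc : 0 ≤ c)
    (hbase : ∀ r t : ℕ, 2 ≤ r → r + 1 ≤ t → c * ((r : ℝ) ^ 2 / log r) * log t ≤ Ncff r 1 1 t)
    {r w s : ℕ} (hw : w ≠ 0) (hwr : w ≤ r) (hr : 2 ≤ r) (hrs : r ≤ s) :
    c * (cffCoeff r w / log r) * log (s + 1) ≤ Ncff r w 1 (s + w) := by
  obtain ⟨w, rfl⟩ := Nat.exists_eq_add_one_of_ne_zero hw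
  rcases eq_or_ne w 0 with rfl | hw₀
  · simpa [cffCoeff_one] using hbase r (s + 1) hr (by omega)
  obtain ⟨r, rfl⟩ : ∃ r', r = r' + 1 := ⟨r - 1, by omega⟩
  have hw_pred :
      c * (cffCoeff (r + 1) w / log ↑(r + 1)) * log (s + 1) ≤ Ncff (r + 1) w 1 (s + w) :=
    le_Ncff_of_le_Ncff_one hc hbase hw₀ (by omega) hr hrs
  have hr_pred : c * (cffCoeff r (w + 1) / log ↑(r + 1)) * log (s + 1) ≤
      Ncff r (w + 1) 1 (s + w) := by
    rcases (Nat.le_of_add_le_add_right hwr).eq_or_lt with rfl | hlt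
    · rw [Ncff_comm]
      refine le_trans ?_ hw_pred
      gcongr
      · exact log_nonneg (le_add_of_nonneg_left s.cast_nonneg)
      · exact_mod_cast cffCoeff_le_cffCoeff_swap w
    · obtain ⟨s, rfl⟩ : ∃ s', s = s' + 1 := ⟨s - 1, by omega⟩
      have ih : c * (cffCoeff r (w + 1) / log r) * log (s + 1) ≤ Ncff r (w + 1) 1 (s + (w + 1)) :=
        le_Ncff_of_le_Ncff_one hc hbase w.add_one_ne_zero hlt (by omega) (by omega)
      have hratio := log_add_one_div_log_add_one_le (a := r) (x := s + 1)
        (by exact_mod_cast (by omega : 1 < r)) (by exact_mod_cast (by omega : r ≤ s + 1))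
      calc c * (cffCoeff r (w + 1) / log ↑(r + 1)) * log (↑(s + 1) + 1)
          = c * cffCoeff r (w + 1) * (log ((s : ℝ) + 1 + 1) / log ((r : ℝ) + 1)) := by
            push_cast; ring
        _ ≤ c * cffCoeff r (w + 1) * (log ((s : ℝ) + 1) / log r) :=
            mul_le_mul_of_nonneg_left hratio (by positivity)
        _ = c * (cffCoeff r (w + 1) / log r) * log (s + 1) := by ring
        _ ≤ Ncff r (w + 1) 1 (s + 1 + w) := by rwa [show s + 1 + w = s + (w + 1) by omega]
  calc c * (cffCoeff (r + 1) (w + 1) / log ↑(r + 1)) * log (s + 1)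
      = c * (cffCoeff (r + 1) w / log ↑(r + 1)) * log (s + 1)
        + c * (cffCoeff r (w + 1) / log ↑(r + 1)) * log (s + 1) := by
        rw [cffCoeff_pascal (by omega) hw₀]; push_cast; ring
    _ ≤ Ncff (r + 1) w 1 (s + w) + Ncff r (w + 1) 1 (s + w) := add_le_add hw_pred hr_pred
    _ ≤ Ncff (r + 1) (w + 1) 1 (s + (w + 1)) := by
        exact_mod_cast Ncff_add_le_Ncff_succ (by omega) hw₀
termination_by r + w

/-- If `c > 0` is a constant with `N((r,1),t) ≥ c·(r²/log r)·log t` for all `r ≥ 2`,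
`t ≥ r+1`, then for all positive `r, w, t` with `r ≥ w`, `r ≥ 2`, `t ≥ r + w`,
`N((r,w),t) ≥ c·((C(r+w,w+1) + C(r+w−1,w+1) + 3·C(r+w−4,w−2)) / log r)·log(t−w+1)`,
where `C(r+w−4, w−2)` is read as 0 when `w < 2`. -/
theorem cff_estimate_bound (c : ℝ) (hc : 0 < c)
    (hbase : ∀ r t : ℕ, 2 ≤ r → r + 1 ≤ t →
      c * ((r : ℝ) ^ 2 / Real.log r) * Real.log t ≤ Ncff r 1 1 t)
    (r w t : ℕ) (hw : 0 < w) (hwr : w ≤ r) (hr : 2 ≤ r) (ht : r + w ≤ t) :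
    c * ((((r + w).choose (w + 1) : ℝ) + ((r + w - 1).choose (w + 1) : ℝ)
          + 3 * (if 2 ≤ w then ((r + w - 4).choose (w - 2) : ℝ) else 0)) / Real.log r)
        * Real.log ((t - w + 1 : ℕ) : ℝ)
      ≤ Ncff r w 1 t := by
  have hcoeff : ((r + w).choose (w + 1) : ℝ) + ((r + w - 1).choose (w + 1) : ℝ)
      + 3 * (if 2 ≤ w then ((r + w - 4).choose (w - 2) : ℝ) else 0) = cffCoeff r w := by
    simp only [cffCoeff]
    push_cast [apply_ite (Nat.cast : ℕ → ℝ)]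
    ring
  rw [hcoeff, Nat.cast_add_one]
  simpa only [Nat.sub_add_cancel (by omega : w ≤ t)] using
    le_Ncff_of_le_Ncff_one hc.le hbase hw.ne' hwr hr (s := t - w) (by omega)
end

section
/- For all positive integers r, w, t with w ≤ r and t ≥ r + w, the fractional biclique covering number of the bi-intersection graph satisfies bc*(I_t(r,w)) = min_{w ≤ m ≤ t−r} C(t,m) / C(t−r−w, m−w), where C(·,·) denotes the binomial coefficient and the minimum is over integers m. -/
/-- `fracBC G` = `bc*(G)`, the fractional biclique covering number of a finite graph
`G`: the infimum of `Σ φ` over all `[0,1]`-valued weightings `φ` of pairs of vertex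
sets, supported on bicliques of `G`, such that every edge of `G` receives total
weight at least 1 from the bicliques containing it. -/
noncomputable def fracBC {V : Type*} [Fintype V] [DecidableEq V] (G : SimpleGraph V) : ℝ :=
  sInf {s : ℝ | ∃ φ : Finset V × Finset V → ℝ,
    (∀ p, 0 ≤ φ p ∧ φ p ≤ 1) ∧
    (∀ p, ¬(Disjoint p.1 p.2 ∧ ∀ x ∈ p.1, ∀ y ∈ p.2, G.Adj x y) → φ p = 0) ∧
    (∀ x y, G.Adj x y → 1 ≤ ∑ p : Finset V × Finset V,
      (if (x ∈ p.1 ∧ y ∈ p.2) ∨ (y ∈ p.1 ∧ x ∈ p.2) then φ p else 0)) ∧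
    s = ∑ p : Finset V × Finset V, φ p}

/-!
An edge of `I_t(r,w)` is a pair `(A, B)` of disjoint sets with `#A = r`, `#B = w`; there are
`C(t,r) C(t-r,w)` of them. If `S` is the union of the `w`-sets on one side of a biclique, all its
edges satisfy `B ⊆ S` and `A ⊆ Sᶜ`, so a biclique covers at most
`K = max_m C(m,w) C(t-m,r)` edges, and summing the covering condition over all edges gives
`bc* ≥ C(t,r) C(t-r,w) / K`. Conversely, every `m`-set `M` yields the biclique
(`r`-subsets of `Mᶜ`, `w`-subsets of `M`); each edge lies in exactly `C(t-r-w, m-w)` of these,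
so weight `1 / C(t-r-w, m-w)` on each is a fractional cover of total weight
`C(t,m) / C(t-r-w, m-w)`. The identity
`C(t,m) C(m,w) C(t-m,r) = C(t,r) C(t-r,w) C(t-r-w,m-w)` makes the two bounds meet at the
maximising `m`.
-/

open Finset

/-- Reducible, so that `if CoversEdge p x y then …` uses the same `Decidable` instance as
`fracBC`. -/
abbrev CoversEdge {V : Type*} (p : Finset V × Finset V) (x y : V) : Prop :=
  (x ∈ p.1 ∧ y ∈ p.2) ∨ (y ∈ p.1 ∧ x ∈ p.2)

theorem coversEdge_comm {V : Type*} {p : Finset V × Finset V} {x y : V} :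
    CoversEdge p x y ↔ CoversEdge p y x :=
  or_comm

namespace SimpleGraph

section

variable {V : Type*} (G : SimpleGraph V)

def IsBiclique (p : Finset V × Finset V) : Prop :=
  Disjoint p.1 p.2 ∧ ∀ x ∈ p.1, ∀ y ∈ p.2, G.Adj x y

variable {G} in
theorem IsBiclique.swap {p : Finset V × Finset V} (hp : G.IsBiclique p) :
    G.IsBiclique p.swap :=
  ⟨hp.1.symm, fun x hx y hy => (hp.2 y hy x hx).symm⟩

end

variable {V : Type*} [Fintype V] [DecidableEq V] (G : SimpleGraph V)

structure IsFracBicliqueCover (φ : Finset V × Finset V → ℝ) : Prop where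
  nonneg : ∀ p, 0 ≤ φ p
  le_one : ∀ p, φ p ≤ 1
  eq_zero_of_not_isBiclique : ∀ p, ¬ G.IsBiclique p → φ p = 0
  one_le_sum : ∀ x y, G.Adj x y → 1 ≤ ∑ p, if CoversEdge p x y then φ p else 0

theorem fracBC_eq_sInf :
    fracBC G = sInf {s | ∃ φ, G.IsFracBicliqueCover φ ∧ s = ∑ p, φ p} := by
  refine congrArg sInf (Set.ext fun s => ?_)
  exact ⟨fun ⟨φ, h01, hsupp, hcov, hs⟩ =>
      ⟨φ, ⟨fun p => (h01 p).1, fun p => (h01 p).2, hsupp, hcov⟩, hs⟩,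
    fun ⟨φ, hφ, hs⟩ => ⟨φ, fun p => ⟨hφ.nonneg p, hφ.le_one p⟩,
      hφ.eq_zero_of_not_isBiclique, hφ.one_le_sum, hs⟩⟩

variable {G}

theorem IsFracBicliqueCover.card_le_mul_sum {φ : Finset V × Finset V → ℝ}
    (hφ : G.IsFracBicliqueCover φ) {D : Finset (V × V)} (hD : ∀ e ∈ D, G.Adj e.1 e.2) {K : ℕ}
    (hK : ∀ p, G.IsBiclique p → #{e ∈ D | CoversEdge p e.1 e.2} ≤ K) :
    (#D : ℝ) ≤ K * ∑ p, φ p := by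
  calc (#D : ℝ) = ∑ e ∈ D, 1 := by simp
    _ ≤ ∑ e ∈ D, ∑ p, if CoversEdge p e.1 e.2 then φ p else 0 :=
        sum_le_sum fun e he => hφ.one_le_sum _ _ (hD e he)
    _ = ∑ p, #{e ∈ D | CoversEdge p e.1 e.2} * φ p := by
        rw [sum_comm]
        simp only [← sum_filter, sum_const, nsmul_eq_mul]
    _ ≤ ∑ p, K * φ p := by
        refine sum_le_sum fun p _ => ?_
        by_cases hp : G.IsBiclique p
        · exact mul_le_mul_of_nonneg_right (by exact_mod_cast hK p hp) (hφ.nonneg p)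
        · simp [hφ.eq_zero_of_not_isBiclique p hp]
    _ = K * ∑ p, φ p := (mul_sum ..).symm

theorem exists_isFracBicliqueCover_of_injOn {ι : Type*} {s : Finset ι}
    {f : ι → Finset V × Finset V} (hf : Set.InjOn f s) (hbic : ∀ i ∈ s, G.IsBiclique (f i))
    {c : ℕ} (hc : 0 < c) (hcov : ∀ x y, G.Adj x y → c ≤ #{i ∈ s | CoversEdge (f i) x y}) :
    ∃ φ, G.IsFracBicliqueCover φ ∧ ∑ p, φ p = #s / c := by
  set φ : Finset V × Finset V → ℝ := fun p => if p ∈ s.image f then (c : ℝ)⁻¹ else 0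
  have sum_φ : ∀ g : Finset V × Finset V → ℝ, ∑ p, (if p ∈ s.image f then g p else 0)
      = ∑ i ∈ s, g (f i) := fun g => by
    rw [← sum_filter, filter_mem_eq_inter, univ_inter, sum_image hf]
  have hc_one : (1 : ℝ) ≤ c := by exact_mod_cast hc
  refine ⟨φ, ⟨fun p => ?_, fun p => ?_, fun p hp => ?_, fun x y hxy => ?_⟩, ?_⟩
  · positivity
  · simp only [φ]; split_ifs
    · exact inv_le_one_of_one_le₀ hc_one
    · exact zero_le_one
  · refine if_neg fun hmem => hp ?_
    obtain ⟨i, hi, rfl⟩ := mem_image.mp hmem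
    exact hbic i hi
  · have hsum : (∑ p, if CoversEdge p x y then φ p else 0)
        = ∑ i ∈ s, if CoversEdge (f i) x y then (c : ℝ)⁻¹ else 0 := by
      rw [← sum_φ fun p => if CoversEdge p x y then (c : ℝ)⁻¹ else 0]
      exact sum_congr rfl fun p _ => by simp only [φ]; split_ifs <;> rfl
    rw [hsum, ← sum_filter, sum_const, nsmul_eq_mul, ← div_eq_mul_inv,
      le_div_iff₀ (by positivity), one_mul]
    exact_mod_cast hcov x y hxy
  · rw [div_eq_mul_inv, ← nsmul_eq_mul, ← sum_const]
    exact sum_φ _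

end SimpleGraph

theorem Nat.choose_mul_choose_sub_comm (n a b : ℕ) :
    n.choose a * (n - a).choose b = n.choose b * (n - b).choose a := by
  have hsymm : (a + b).choose a = (a + b).choose b := Nat.choose_symm_add
  have ha := Nat.choose_mul (n := n) (Nat.le_add_right a b)
  have hb := Nat.choose_mul (n := n) (Nat.le_add_left b a)
  rw [Nat.add_sub_cancel_left] at ha
  rw [Nat.add_sub_cancel] at hb
  rw [← ha, ← hb, hsymm]

theorem Nat.choose_mul_choose_mul_choose {t r w m : ℕ} (hwm : w ≤ m) :
    t.choose m * (m.choose w * (t - m).choose r)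
      = t.choose r * (t - r).choose w * (t - r - w).choose (m - w) := by
  have h₁ : t.choose m * m.choose w = t.choose w * (t - w).choose (m - w) := Nat.choose_mul hwm
  have h₂ : (t - w).choose (m - w) * (t - m).choose r
      = (t - w).choose r * (t - r - w).choose (m - w) := by
    have := Nat.choose_mul_choose_sub_comm (t - w) (m - w) r
    rwa [show t - w - (m - w) = t - m by omega, show t - w - r = t - r - w by omega] at this
  have h₃ : t.choose w * (t - w).choose r = t.choose r * (t - r).choose w :=
    Nat.choose_mul_choose_sub_comm t w r
  calc t.choose m * (m.choose w * (t - m).choose r)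
      = t.choose w * ((t - w).choose (m - w) * (t - m).choose r) := by
        rw [← mul_assoc, h₁, mul_assoc]
    _ = t.choose r * (t - r).choose w * (t - r - w).choose (m - w) := by
        rw [h₂, ← mul_assoc, h₃]

def maxBicliqueEdges (n r w : ℕ) : ℕ :=
  (range (n + 1)).sup fun m => m.choose w * (n - m).choose r

theorem choose_mul_choose_le_maxBicliqueEdges {n m : ℕ} (r w : ℕ) (hm : m ≤ n) :
    m.choose w * (n - m).choose r ≤ maxBicliqueEdges n r w :=
  le_sup (f := fun m => m.choose w * (n - m).choose r) (mem_range_succ_iff.mpr hm)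

theorem maxBicliqueEdges_pos {n r w : ℕ} (h : r + w ≤ n) : 0 < maxBicliqueEdges n r w :=
  lt_of_lt_of_le (Nat.mul_pos (Nat.choose_pos le_rfl) (Nat.choose_pos (by omega)))
    (choose_mul_choose_le_maxBicliqueEdges r w (m := w) (by omega))

theorem exists_maxBicliqueEdges_eq {n r w : ℕ} (h : r + w ≤ n) :
    ∃ m, w ≤ m ∧ m + r ≤ n ∧ maxBicliqueEdges n r w = m.choose w * (n - m).choose r := by
  obtain ⟨m, hm, hmax⟩ := exists_mem_eq_sup (range (n + 1)) nonempty_range_add_one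
    fun m => m.choose w * (n - m).choose r
  have hpos : 0 < m.choose w * (n - m).choose r := hmax ▸ maxBicliqueEdges_pos h
  refine ⟨m, ?_, ?_, hmax⟩
  · by_contra! hmw
    simp [Nat.choose_eq_zero_of_lt hmw] at hpos
  · by_contra! hmr
    have hmn := mem_range_succ_iff.mp hm
    simp [Nat.choose_eq_zero_of_lt (show n - m < r by omega)] at hpos

section

variable {α : Type*} [Fintype α] [DecidableEq α]

theorem card_mul_card_le_maxBicliqueEdges {𝒜 ℬ : Finset (Finset α)} {r w : ℕ}
    (h𝒜 : ∀ A ∈ 𝒜, #A = r) (hℬ : ∀ B ∈ ℬ, #B = w)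
    (hdisj : ∀ A ∈ 𝒜, ∀ B ∈ ℬ, Disjoint A B) :
    #𝒜 * #ℬ ≤ maxBicliqueEdges (Fintype.card α) r w := by
  set S := ℬ.sup id
  have h𝒜S : 𝒜 ⊆ Sᶜ.powersetCard r := fun A hA => mem_powersetCard.mpr
    ⟨subset_compl_iff_disjoint_right.mpr (Finset.disjoint_sup_right.mpr (hdisj A hA)), h𝒜 A hA⟩
  have hℬS : ℬ ⊆ S.powersetCard w := fun B hB => mem_powersetCard.mpr
    ⟨le_sup (f := id) hB, hℬ B hB⟩
  calc #𝒜 * #ℬ ≤ #(Sᶜ.powersetCard r) * #(S.powersetCard w) :=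
        Nat.mul_le_mul (card_le_card h𝒜S) (card_le_card hℬS)
    _ = (#S).choose w * (Fintype.card α - #S).choose r := by
        rw [card_powersetCard, card_powersetCard, card_compl, mul_comm]
    _ ≤ maxBicliqueEdges (Fintype.card α) r w :=
        choose_mul_choose_le_maxBicliqueEdges r w (card_le_univ S)

variable (α) in
def disjointPairs (r w : ℕ) : Finset (Finset α × Finset α) :=
  {e ∈ powersetCard r univ ×ˢ powersetCard w univ | Disjoint e.1 e.2}

theorem mem_disjointPairs {r w : ℕ} {e : Finset α × Finset α} :
    e ∈ disjointPairs α r w ↔ #e.1 = r ∧ #e.2 = w ∧ Disjoint e.1 e.2 := by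
  simp [disjointPairs, and_assoc]

theorem card_disjointPairs (r w : ℕ) :
    #(disjointPairs α r w) = (Fintype.card α).choose r * (Fintype.card α - r).choose w := by
  rw [disjointPairs, card_filter, sum_product]
  calc ∑ A ∈ powersetCard r univ, ∑ B ∈ powersetCard w univ, (if Disjoint A B then 1 else 0)
      = ∑ A ∈ powersetCard r univ, (Fintype.card α - r).choose w :=
        sum_congr rfl fun A hA => ?_
    _ = _ := by simp
  rw [← card_filter, ← mem_powersetCard_univ.mp hA, ← card_compl, ← card_powersetCard]
  congr 1
  ext B
  simp [subset_compl_iff_disjoint_left, and_comm]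

theorem card_filter_subset_disjoint {r w m : ℕ} {A B : Finset α} (hA : #A = r) (hB : #B = w)
    (hAB : Disjoint A B) (hwm : w ≤ m) :
    #{M ∈ powersetCard m univ | B ⊆ M ∧ Disjoint A M}
      = (Fintype.card α - r - w).choose (m - w) := by
  have hBA : B ⊆ Aᶜ := subset_compl_iff_disjoint_left.mpr hAB
  rw [← hA, ← hB, ← card_compl, ← card_filter_powersetCard_subset B Aᶜ m hBA (by omega)]
  congr 1
  ext M
  simp [subset_compl_iff_disjoint_left, and_comm, and_left_comm, and_assoc]

end

theorem choose_div_choose_eq {t r w m : ℕ} (hwm : w ≤ m) (hmt : m + r ≤ t) :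
    (t.choose m : ℝ) / (t - r - w).choose (m - w)
      = (t.choose r * (t - r).choose w : ℕ) / (m.choose w * (t - m).choose r : ℕ) := by
  have hc : 0 < (t - r - w).choose (m - w) := Nat.choose_pos (by omega)
  have hK : 0 < m.choose w * (t - m).choose r :=
    Nat.mul_pos (Nat.choose_pos hwm) (Nat.choose_pos (by omega))
  rw [div_eq_div_iff (by positivity) (by positivity)]
  exact_mod_cast Nat.choose_mul_choose_mul_choose hwm

theorem isLeast_choose_div_choose {t r w : ℕ} (h : r + w ≤ t) :
    IsLeast {x : ℝ | ∃ m : ℕ, w ≤ m ∧ m ≤ t - r ∧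
        x = (t.choose m : ℝ) / ((t - r - w).choose (m - w) : ℝ)}
      ((t.choose r * (t - r).choose w : ℕ) / maxBicliqueEdges t r w) := by
  obtain ⟨m₀, hwm₀, hm₀t, hmax⟩ := exists_maxBicliqueEdges_eq h
  refine ⟨⟨m₀, hwm₀, by omega, by rw [choose_div_choose_eq hwm₀ hm₀t, hmax]⟩, ?_⟩
  rintro _ ⟨m, hwm, hmt, rfl⟩
  rw [choose_div_choose_eq hwm (by omega)]
  have hK : 0 < m.choose w * (t - m).choose r :=
    Nat.mul_pos (Nat.choose_pos hwm) (Nat.choose_pos (by omega))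
  gcongr
  exact choose_mul_choose_le_maxBicliqueEdges r w (by omega)

open Sum SimpleGraph

section biIntGraph

variable {t r w : ℕ}

theorem biIntGraph_adj_inl_inr {A B : Finset (Fin t)} :
    (biIntGraph t r w).Adj (inl A) (inr B) ↔ #A = r ∧ #B = w ∧ Disjoint A B := by
  simp [biIntGraph]

theorem biIntGraph_adj_iff {x y : Finset (Fin t) ⊕ Finset (Fin t)} :
    (biIntGraph t r w).Adj x y ↔ ∃ A B, #A = r ∧ #B = w ∧ Disjoint A B ∧
      (x = inl A ∧ y = inr B ∨ x = inr B ∧ y = inl A) := by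
  simp only [biIntGraph, fromRel_adj]
  constructor
  · rintro ⟨-, ⟨A, B, rfl, rfl, hA, hB, hAB⟩ | ⟨A, B, rfl, rfl, hA, hB, hAB⟩⟩
    · exact ⟨A, B, hA, hB, hAB, .inl ⟨rfl, rfl⟩⟩
    · exact ⟨A, B, hA, hB, hAB, .inr ⟨rfl, rfl⟩⟩
  · rintro ⟨A, B, hA, hB, hAB, ⟨rfl, rfl⟩ | ⟨rfl, rfl⟩⟩
    · exact ⟨inl_ne_inr, .inl ⟨A, B, rfl, rfl, hA, hB, hAB⟩⟩
    · exact ⟨inr_ne_inl, .inr ⟨A, B, rfl, rfl, hA, hB, hAB⟩⟩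

theorem biIntGraph_not_adj_inl_inl {A A' : Finset (Fin t)} :
    ¬ (biIntGraph t r w).Adj (inl A) (inl A') := by
  simp [biIntGraph_adj_iff]

variable
  {p : Finset (Finset (Fin t) ⊕ Finset (Fin t)) × Finset (Finset (Fin t) ⊕ Finset (Fin t))}

theorem card_filter_inl_inr_le_maxBicliqueEdges (hp : (biIntGraph t r w).IsBiclique p) :
    #{e ∈ disjointPairs (Fin t) r w | inl e.1 ∈ p.1 ∧ inr e.2 ∈ p.2}
      ≤ maxBicliqueEdges t r w := by
  set 𝒜 := {A ∈ powersetCard r (univ : Finset (Fin t)) | inl A ∈ p.1}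
  set ℬ := {B ∈ powersetCard w (univ : Finset (Fin t)) | inr B ∈ p.2}
  have hsub : {e ∈ disjointPairs (Fin t) r w | inl e.1 ∈ p.1 ∧ inr e.2 ∈ p.2} ⊆ 𝒜 ×ˢ ℬ := by
    intro e he
    simp only [mem_filter, mem_disjointPairs] at he
    simp [𝒜, ℬ, he]
  have hdisj : ∀ A ∈ 𝒜, ∀ B ∈ ℬ, Disjoint A B := fun A hA B hB =>
    (biIntGraph_adj_inl_inr.mp (hp.2 _ (mem_filter.mp hA).2 _ (mem_filter.mp hB).2)).2.2
  calc _ ≤ #(𝒜 ×ˢ ℬ) := card_le_card hsub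
    _ = #𝒜 * #ℬ := card_product _ _
    _ ≤ maxBicliqueEdges t r w := by
        simpa using card_mul_card_le_maxBicliqueEdges
          (fun A hA => (mem_powersetCard_univ.mp (mem_filter.mp hA).1))
          (fun B hB => (mem_powersetCard_univ.mp (mem_filter.mp hB).1)) hdisj

theorem card_filter_coversEdge_le_maxBicliqueEdges (hp : (biIntGraph t r w).IsBiclique p) :
    #{e ∈ disjointPairs (Fin t) r w | CoversEdge p (inl e.1) (inr e.2)}
      ≤ maxBicliqueEdges t r w := by
  by_cases h : ∀ A, inl A ∉ p.2
  · simpa [CoversEdge, h] using card_filter_inl_inr_le_maxBicliqueEdges hp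
  · obtain ⟨A₀, hA₀⟩ := not_forall_not.mp h
    have hno : ∀ A, inl A ∉ p.1 := fun A hA => biIntGraph_not_adj_inl_inl (hp.2 _ hA _ hA₀)
    simpa [CoversEdge, hno, and_comm] using card_filter_inl_inr_le_maxBicliqueEdges hp.swap

theorem SimpleGraph.IsFracBicliqueCover.card_disjointPairs_le
    {φ : Finset (Finset (Fin t) ⊕ Finset (Fin t)) × Finset (Finset (Fin t) ⊕ Finset (Fin t)) → ℝ}
    (hφ : (biIntGraph t r w).IsFracBicliqueCover φ) :
    (#(disjointPairs (Fin t) r w) : ℝ) ≤ maxBicliqueEdges t r w * ∑ p, φ p := by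
  rw [← card_map (.prodMap .inl .inr)]
  refine hφ.card_le_mul_sum (fun e he => ?_) fun p hp => ?_
  · obtain ⟨e', he', rfl⟩ := mem_map.mp he
    exact biIntGraph_adj_inl_inr.mpr (mem_disjointPairs.mp he')
  · rw [filter_map, card_map]
    exact card_filter_coversEdge_le_maxBicliqueEdges hp

variable (r w) in
def bicliqueOfSet (M : Finset (Fin t)) :
    Finset (Finset (Fin t) ⊕ Finset (Fin t)) × Finset (Finset (Fin t) ⊕ Finset (Fin t)) :=
  ((Mᶜ.powersetCard r).map .inl, (M.powersetCard w).map .inr)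

theorem isBiclique_bicliqueOfSet (M : Finset (Fin t)) :
    (biIntGraph t r w).IsBiclique (bicliqueOfSet r w M) := by
  refine ⟨disjoint_left.mpr ?_, ?_⟩
  · simp [bicliqueOfSet]
  · simp only [bicliqueOfSet, mem_map, mem_powersetCard]
    rintro _ ⟨A, ⟨hAM, hA⟩, rfl⟩ _ ⟨B, ⟨hBM, hB⟩, rfl⟩
    exact biIntGraph_adj_inl_inr.mpr
      ⟨hA, hB, (disjoint_compl_left.mono_left hAM).mono_right hBM⟩

theorem bicliqueOfSet_injOn (hw : 0 < w) {m : ℕ} (hwm : w ≤ m) :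
    Set.InjOn (bicliqueOfSet r w)
      ((powersetCard m univ : Finset (Finset (Fin t))) : Set (Finset (Fin t))) := by
  intro M hM M' hM' h
  exact powersetCard_injOn hw.ne' hwm (mem_powersetCard_univ.mp hM)
    (mem_powersetCard_univ.mp hM') (map_injective _ (congrArg Prod.snd h))

theorem card_filter_coversEdge_bicliqueOfSet {m : ℕ} {A B : Finset (Fin t)} (hA : #A = r)
    (hB : #B = w) (hAB : Disjoint A B) (hwm : w ≤ m) :
    #{M ∈ powersetCard m univ | CoversEdge (bicliqueOfSet r w M) (inl A) (inr B)}
      = (t - r - w).choose (m - w) := by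
  have hcount := card_filter_subset_disjoint hA hB hAB hwm
  rw [Fintype.card_fin] at hcount
  rw [← hcount]
  congr 1
  refine filter_congr fun M _ => ?_
  simp [bicliqueOfSet, CoversEdge, hA, hB, subset_compl_iff_disjoint_left, and_comm,
    disjoint_comm]

theorem exists_isFracBicliqueCover_biIntGraph {m : ℕ} (hw : 0 < w) (hwm : w ≤ m)
    (hmt : m + r ≤ t) :
    ∃ φ, (biIntGraph t r w).IsFracBicliqueCover φ ∧
      ∑ p, φ p = (t.choose m : ℝ) / (t - r - w).choose (m - w) := by
  have hcov : ∀ x y, (biIntGraph t r w).Adj x y → (t - r - w).choose (m - w)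
      ≤ #{M ∈ powersetCard m univ | CoversEdge (bicliqueOfSet r w M) x y} := by
    intro x y hxy
    obtain ⟨A, B, hA, hB, hAB, ⟨rfl, rfl⟩ | ⟨rfl, rfl⟩⟩ := biIntGraph_adj_iff.mp hxy
    · exact (card_filter_coversEdge_bicliqueOfSet hA hB hAB hwm).ge
    · simp only [coversEdge_comm (x := inr B)]
      exact (card_filter_coversEdge_bicliqueOfSet hA hB hAB hwm).ge
  simpa using exists_isFracBicliqueCover_of_injOn (bicliqueOfSet_injOn hw hwm)
    (fun M _ => isBiclique_bicliqueOfSet M) (Nat.choose_pos (by omega)) hcov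

theorem isLeast_fracBicliqueCover_biIntGraph (hw : 0 < w) (h : r + w ≤ t) :
    IsLeast {s | ∃ φ, (biIntGraph t r w).IsFracBicliqueCover φ ∧ s = ∑ p, φ p}
      ((t.choose r * (t - r).choose w : ℕ) / maxBicliqueEdges t r w) := by
  obtain ⟨m₀, hwm₀, hm₀t, hmax⟩ := exists_maxBicliqueEdges_eq h
  obtain ⟨φ, hφ, hsum⟩ := exists_isFracBicliqueCover_biIntGraph hw hwm₀ hm₀t
  refine ⟨⟨φ, hφ, by rw [hsum, choose_div_choose_eq hwm₀ hm₀t, hmax]⟩, ?_⟩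
  rintro _ ⟨φ, hφ, rfl⟩
  have hK : (0 : ℝ) < maxBicliqueEdges t r w := by exact_mod_cast maxBicliqueEdges_pos h
  rw [div_le_iff₀ hK, mul_comm _ (maxBicliqueEdges t r w : ℝ)]
  simpa [card_disjointPairs] using hφ.card_disjointPairs_le

end biIntGraph

theorem fracBC_biIntGraph_general (r w t : ℕ) (hw : 0 < w) (ht : r + w ≤ t) :
    fracBC (biIntGraph t r w)
      = sInf {x : ℝ | ∃ m : ℕ, w ≤ m ∧ m ≤ t - r ∧
          x = (t.choose m : ℝ) / ((t - r - w).choose (m - w) : ℝ)} := by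
  rw [fracBC_eq_sInf, (isLeast_fracBicliqueCover_biIntGraph hw ht).csInf_eq,
    (isLeast_choose_div_choose ht).csInf_eq]

/-- For positive integers `r, w, t` with `w ≤ r` and `t ≥ r + w`,
`bc*(I_t(r,w)) = min_{w ≤ m ≤ t−r} C(t,m) / C(t−r−w, m−w)`. -/
theorem fracBC_biIntGraph (r w t : ℕ) (hw : 0 < w) (hwr : w ≤ r) (ht : r + w ≤ t) :
    fracBC (biIntGraph t r w)
      = sInf {x : ℝ | ∃ m : ℕ, w ≤ m ∧ m ≤ t - r ∧
          x = (t.choose m : ℝ) / ((t - r - w).choose (m - w) : ℝ)} :=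
  fracBC_biIntGraph_general r w t hw ht
end

section
/- Let d be a positive integer such that there exists a Hadamard matrix of order 4d. Then N((1,1;d), 4d−1) = 4d−1. -/
/-!
Lower bound: count the triples `(x, i, j)` with `x ∈ Bᵢ \ Bⱼ`. Each ordered pair `i ≠ j`
contributes at least `d` of them, while a point lying in `k` of the `4d - 1` blocks contributes
`k (4d - 1 - k) ≤ 2d (2d - 1)`; comparing the two counts gives `n ≥ 4d - 1`.

Upper bound: multiply rows and columns of the Hadamard matrix by signs so that its first row and
column consist of ones. For every other row `i`, the block `Bᵢ` is the set of other columns where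
row `i` has entry `1`. Rows `i`, `j` and the first row are pairwise orthogonal, which forces exactly
`d` columns where row `i` is `1` and row `j` is `-1`, so `|Bᵢ \ Bⱼ| = d`.
-/

open Finset

theorem mul_le_of_add_eq_two_mul_add_one {k m c : ℕ} (h : k + m = 2 * c + 1) :
    k * m ≤ c * (c + 1) := by
  rcases le_or_gt k c with hk | hk <;> nlinarith

section DoubleCounting

variable {ι α : Type*} [Fintype ι] [DecidableEq α]

theorem mul_le_sum_sum_card_sdiff {d : ℕ} (B : ι → Finset α)
    (hB : ∀ i j, i ≠ j → d ≤ #(B i \ B j)) :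
    Fintype.card ι * ((Fintype.card ι - 1) * d) ≤ ∑ i, ∑ j, #(B i \ B j) := by
  classical
  rw [← smul_eq_mul, ← Finset.card_univ, ← sum_const]
  refine sum_le_sum fun i _ => ?_
  calc (Fintype.card ι - 1) * d = ∑ j ∈ univ.erase i, d := by simp
    _ ≤ ∑ j ∈ univ.erase i, #(B i \ B j) :=
        sum_le_sum fun j hj => hB i j (ne_of_mem_erase hj).symm
    _ ≤ ∑ j, #(B i \ B j) := sum_le_sum_of_subset (subset_univ _)

variable [Fintype α]

theorem sum_sum_card_sdiff_eq (B : ι → Finset α) :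
    ∑ i, ∑ j, #(B i \ B j) = ∑ x, #{i | x ∈ B i} * #{i | x ∉ B i} := by
  have h (i j) :
      #(B i \ B j) = ∑ x, (if x ∈ B i then 1 else 0) * if x ∉ B j then 1 else 0 := by
    simp only [ite_zero_mul_ite_zero, mul_one, ← card_filter]
    congr 1; ext; simp
  simp only [h, card_filter, sum_mul_sum]
  exact (sum_congr rfl fun _ _ => sum_comm).trans sum_comm

theorem sum_sum_card_sdiff_le {c : ℕ} (hι : Fintype.card ι = 2 * c + 1) (B : ι → Finset α) :
    ∑ i, ∑ j, #(B i \ B j) ≤ Fintype.card α * (c * (c + 1)) := by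
  rw [sum_sum_card_sdiff_eq, ← smul_eq_mul, ← Finset.card_univ, ← sum_const]
  refine sum_le_sum fun x _ => mul_le_of_add_eq_two_mul_add_one ?_
  rw [card_filter_add_card_filter_not, card_univ, hι]

theorem le_card_of_forall_le_card_sdiff {d : ℕ} (hd : 0 < d) (hι : Fintype.card ι = 4 * d - 1)
    (B : ι → Finset α) (hB : ∀ i j, i ≠ j → d ≤ #(B i \ B j)) :
    4 * d - 1 ≤ Fintype.card α := by
  obtain ⟨c, hc⟩ : ∃ c, 2 * d = c + 1 := ⟨2 * d - 1, by omega⟩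
  have h := (mul_le_sum_sum_card_sdiff B hB).trans (sum_sum_card_sdiff_le (c := c) (by omega) B)
  have hpairs : (4 * d - 1 - 1) * d = c * (c + 1) := by
    rw [show 4 * d - 1 - 1 = 2 * c by omega, ← hc]; ring
  rw [hι, hpairs] at h
  exact Nat.le_of_mul_le_mul_right h (Nat.mul_pos (by omega) (by omega))

end DoubleCounting

theorem four_mul_card_filter_eq_one_and_eq_neg_one {κ : Type*} [Fintype κ]
    {u v : κ → ℝ} (hu : ∀ c, u c = 1 ∨ u c = -1) (hv : ∀ c, v c = 1 ∨ v c = -1) :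
    (4 * #{c | u c = 1 ∧ v c = -1} : ℝ) =
      Fintype.card κ + ∑ c, u c - ∑ c, v c - ∑ c, u c * v c := by
  have h : ∀ c, 4 * (if u c = 1 ∧ v c = -1 then 1 else 0 : ℝ) = (1 + u c) * (1 - v c) := by
    intro c
    rcases hu c with h1 | h1 <;> rcases hv c with h2 | h2 <;> norm_num [h1, h2]
  simp only [card_filter, Nat.cast_sum, Nat.cast_ite, Nat.cast_one, Nat.cast_zero, mul_sum, h]
  simp only [add_mul, one_mul, mul_sub, mul_one, sum_sub_distrib, sum_add_distrib, sum_const,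
    card_univ, nsmul_eq_mul]
  ring

namespace Matrix

section CommRing

variable {n R : Type*} [Fintype n] [DecidableEq n] [CommRing R] [StarRing R] {A : Matrix n n R}

theorem IsHadamard.sum_mul_star_eq_zero (hA : A.IsHadamard) {i k : n} (hik : i ≠ k) :
    ∑ j, A i j * star (A k j) = 0 := by
  simpa [mul_apply, hik] using congr_fun (congr_fun hA.mul_conjTranspose i) k

theorem diagonal_mul_mul_diagonal_mul_conjTranspose_self {c : R} (h : A * Aᴴ = c • 1)
    {a b : n → R} (ha : ∀ i, a i ∈ unitary R) (hb : ∀ j, b j ∈ unitary R) :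
    diagonal a * A * diagonal b * (diagonal a * A * diagonal b)ᴴ = c • 1 := by
  have hda : diagonal a * (diagonal a)ᴴ = 1 := by
    simp [diagonal_conjTranspose, Unitary.mul_star_self_of_mem (ha _)]
  have hdb : diagonal b * (diagonal b)ᴴ = 1 := by
    simp [diagonal_conjTranspose, Unitary.mul_star_self_of_mem (hb _)]
  calc diagonal a * A * diagonal b * (diagonal a * A * diagonal b)ᴴ
      = diagonal a * (A * (diagonal b * (diagonal b)ᴴ) * Aᴴ) * (diagonal a)ᴴ := by
        simp only [conjTranspose_mul, Matrix.mul_assoc]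
    _ = c • 1 := by
        rw [hdb, Matrix.mul_one, h, mul_smul_comm, Matrix.mul_one, smul_mul_assoc, hda]

theorem IsHadamard.diagonal_mul_mul_diagonal (hA : A.IsHadamard) {a b : n → R}
    (ha : ∀ i, a i ∈ unitary R) (hb : ∀ j, b j ∈ unitary R) :
    (diagonal a * A * diagonal b).IsHadamard where
  apply_mem i j := by
    simpa [diagonal_mul, mul_diagonal] using mul_mem (mul_mem (ha i) (hA.apply_mem i j)) (hb j)
  mul_conjTranspose := diagonal_mul_mul_diagonal_mul_conjTranspose_self hA.mul_conjTranspose ha hb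
  conjTranspose_mul := by
    simpa [conjTranspose_mul, diagonal_conjTranspose, Matrix.mul_assoc] using
      diagonal_mul_mul_diagonal_mul_conjTranspose_self hA.conjTranspose.mul_conjTranspose
        (a := star b) (b := star a) (fun j => Unitary.star_mem (hb j))
        (fun i => Unitary.star_mem (ha i))

theorem IsHadamard.exists_normalized (hA : A.IsHadamard) (z : n) :
    ∃ G : Matrix n n R, G.IsHadamard ∧ (∀ j, G z j = 1) ∧ ∀ i, G i z = 1 := by
  have hu := hA.apply_mem
  refine ⟨diagonal (fun i => star (A i z)) * A * diagonal (fun j => star (A z j) * A z z),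
    hA.diagonal_mul_mul_diagonal (fun i => Unitary.star_mem (hu i z))
      (fun j => mul_mem (Unitary.star_mem (hu z j)) (hu z z)), fun j => ?_, fun i => ?_⟩ <;>
    simp only [diagonal_mul, mul_diagonal]
  · linear_combination (star (A z z) * A z z) * Unitary.mul_star_self_of_mem (hu z j) +
      Unitary.star_mul_self_of_mem (hu z z)
  · linear_combination (star (A z z) * A z z) * Unitary.star_mul_self_of_mem (hu i z) +
      Unitary.star_mul_self_of_mem (hu z z)

end CommRing

theorem IsHadamard.exists_four_mul_card_sdiff_eq {m : ℕ}
    {A : Matrix (Fin (m + 1)) (Fin (m + 1)) ℝ} (hA : A.IsHadamard) :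
    ∃ B : Fin m → Finset (Fin m), ∀ i j, i ≠ j → 4 * #(B i \ B j) = m + 1 := by
  obtain ⟨G, hG, hrow, hcol⟩ := hA.exists_normalized 0
  have hpm (i j) : G i j = 1 ∨ G i j = -1 :=
    Unitary.mem_iff_eq_one_or_eq_neg_one.mp (hG.apply_mem i j)
  have horth {i k} (hik : i ≠ k) : ∑ c, G i c * G k c = 0 := by
    simpa using hG.sum_mul_star_eq_zero hik
  have hsum {i} (hi : i ≠ 0) : ∑ c, G i c = 0 := by simpa [hrow] using horth hi
  let B : Fin m → Finset (Fin m) := fun i => {x | G i.succ x.succ = 1}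
  refine ⟨B, fun i j hij => ?_⟩
  have hsdiff :
      B i \ B j = ({x : Fin m | G i.succ x.succ = 1 ∧ G j.succ x.succ = -1} : Finset _) := by
    ext x
    have := hpm j.succ x.succ
    simp only [B, mem_sdiff, mem_filter, mem_univ, true_and]
    grind
  have hcard : #(B i \ B j) = #{c | G i.succ c = 1 ∧ G j.succ c = -1} := by
    rw [hsdiff, Fin.card_filter_univ_succ, if_neg (by norm_num [hcol])]
  have hcount : (4 * #{c | G i.succ c = 1 ∧ G j.succ c = -1} : ℝ) = m + 1 := by
    simpa [hsum (Fin.succ_ne_zero i), hsum (Fin.succ_ne_zero j),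
      horth ((Fin.succ_injective _).ne hij)] using
      four_mul_card_filter_eq_one_and_eq_neg_one (hpm i.succ) (hpm j.succ)
  rw [hcard]
  exact_mod_cast hcount

end Matrix

theorem isCFF_one_one_iff {d n t : ℕ} {B : Fin t → Finset (Fin n)} :
    IsCFF 1 1 d n t B ↔ ∀ i j, i ≠ j → d ≤ #(B i \ B j) := by
  refine ⟨fun hB i j hij => by simpa using hB {i} {j} (disjoint_singleton.2 hij) rfl rfl, ?_⟩
  rintro hB L M hLM hL hM
  obtain ⟨i, rfl⟩ := card_eq_one.1 hL
  obtain ⟨j, rfl⟩ := card_eq_one.1 hM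
  simpa using hB i j (disjoint_singleton.1 hLM)

/-- If there exists a Hadamard matrix of order `4d` (with `d > 0`), then
`N((1,1;d), 4d−1) = 4d−1`. -/
theorem cff_hadamard (d : ℕ) (hd : 0 < d)
    (hH : ∃ H : Matrix (Fin (4 * d)) (Fin (4 * d)) ℝ,
      (∀ i j, H i j = 1 ∨ H i j = -1) ∧ H * H.transpose = (4 * d : ℝ) • 1) :
    Ncff 1 1 d (4 * d - 1) = 4 * d - 1 := by
  obtain ⟨H, hpm, horth⟩ := hH
  have hHad : H.IsHadamard :=
    (Matrix.isHadamard_iff_mul_conjTranspose (IsRegular.of_ne_zero (by simp [hd.ne']))).2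
      ⟨fun i j => Unitary.mem_iff_eq_one_or_eq_neg_one.2 (hpm i j), by simpa using horth⟩
  have hm : 4 * d = 4 * d - 1 + 1 := by omega
  obtain ⟨B, hB⟩ := (hHad.reindex (finCongr hm) (finCongr hm)).exists_four_mul_card_sdiff_eq
  have hCFF : IsCFF 1 1 d (4 * d - 1) (4 * d - 1) B :=
    isCFF_one_one_iff.2 fun i j hij => by have := hB i j hij; omega
  rw [Ncff, if_neg (by simp)]
  refine le_antisymm (Nat.sInf_le ⟨B, hCFF⟩) (le_csInf ⟨_, B, hCFF⟩ ?_)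
  rintro n ⟨B', hB'⟩
  simpa using le_card_of_forall_le_card_sdiff hd (by simp) B' (isCFF_one_one_iff.1 hB')
end

section
/- Let g, h, r, w be positive integers and let {(A₁,B₁), …, (A_g,B_g)} be a family of pairs of subsets of an h-element ground set. For 1 ≤ i ≤ h define S_i = { j : i ∈ A_j } and T_i = { j : i ∈ B_j }. Then {(A₁,B₁), …, (A_g,B_g)} is a weakly cross-intersecting set-pairs with |A_j| ≤ r and |B_j| ≤ w for all j if and only if the pairs (S₁,T₁), …, (S_h,T_h) form an (r,w)-biclique cover of size h of the complete graph K_g on vertex set {1,…,g}. -/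
/-!
`S` and `T` transpose the incidence relations `i ∈ A j` and `i ∈ B j`, and transposing twice
gives back `A` and `B`, so each condition on the set-pairs is the matching condition on the
dual pairs. In `K_g` every pair of distinct vertices is an edge, so `(S i, T i)` is a biclique
exactly when `S i` and `T i` are disjoint.
-/

namespace Finset

variable {α β : Type*} [Fintype α] [DecidableEq β]

def dualFamily (A : α → Finset β) (b : β) : Finset α :=
  univ.filter fun a => b ∈ A a

@[simp]
theorem mem_dualFamily {A : α → Finset β} {a : α} {b : β} :
    a ∈ dualFamily A b ↔ b ∈ A a := by
  simp [dualFamily]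

@[simp]
theorem dualFamily_dualFamily [Fintype β] [DecidableEq α] (A : α → Finset β) :
    dualFamily (dualFamily A) = A := by
  ext a b
  simp

theorem forall_disjoint_dualFamily_iff (A B : α → Finset β) :
    (∀ b, Disjoint (dualFamily A b) (dualFamily B b)) ↔ ∀ a, Disjoint (A a) (B a) := by
  simp only [disjoint_left, mem_dualFamily]
  exact forall_comm

theorem inter_union_inter_nonempty_iff_exists_dualFamily (A B : α → Finset β) (j k : α) :
    ((A j ∩ B k) ∪ (A k ∩ B j)).Nonempty ↔
      ∃ i, (j ∈ dualFamily A i ∧ k ∈ dualFamily B i) ∨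
        (k ∈ dualFamily A i ∧ j ∈ dualFamily B i) := by
  simp [Finset.Nonempty]

end Finset

open Finset

theorem weakly_cross_intersecting_iff_dual_biclique_cover_general
    (g h r w : ℕ)
    (A B : Fin g → Finset (Fin h))
    (S : Fin h → Finset (Fin g)) (T : Fin h → Finset (Fin g))
    (hS : ∀ i, S i = Finset.univ.filter (fun j => i ∈ A j))
    (hT : ∀ i, T i = Finset.univ.filter (fun j => i ∈ B j)) :
    ((∀ j, Disjoint (A j) (B j)) ∧
       (∀ j k, j ≠ k → ((A j ∩ B k) ∪ (A k ∩ B j)).Nonempty) ∧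
       (∀ j, (A j).card ≤ r) ∧ (∀ j, (B j).card ≤ w))
    ↔
    ((∀ i, Disjoint (S i) (T i)) ∧
       (∀ i, ∀ x ∈ S i, ∀ y ∈ T i, (⊤ : SimpleGraph (Fin g)).Adj x y) ∧
       (∀ x y : Fin g, (⊤ : SimpleGraph (Fin g)).Adj x y →
         ∃ i, (x ∈ S i ∧ y ∈ T i) ∨ (y ∈ S i ∧ x ∈ T i)) ∧
       (∀ v : Fin g, (Finset.univ.filter (fun i => v ∈ S i)).card ≤ r) ∧
       (∀ v : Fin g, (Finset.univ.filter (fun i => v ∈ T i)).card ≤ w)) := by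
  obtain rfl : S = dualFamily A := funext hS
  obtain rfl : T = dualFamily B := funext hT
  change _ ↔ _ ∧ _ ∧ _ ∧ (∀ v, #(dualFamily (dualFamily A) v) ≤ r) ∧
    ∀ v, #(dualFamily (dualFamily B) v) ≤ w
  simp only [← forall_disjoint_dualFamily_iff A B, SimpleGraph.top_adj, dualFamily_dualFamily,
    ← inter_union_inter_nonempty_iff_exists_dualFamily]
  exact and_congr_right fun hdisj => (and_iff_right fun i => disjoint_iff_ne.mp (hdisj i)).symm

/-- Duality: `{(A_j, B_j)}_{j<g}` is a weakly cross-intersecting set-pairs on an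
`h`-element ground set with `|A_j| ≤ r` and `|B_j| ≤ w` for all `j` iff the dual pairs
`S_i = {j : i ∈ A_j}`, `T_i = {j : i ∈ B_j}` form an `(r,w)`-biclique cover of size `h`
of the complete graph `K_g`: each `(S_i, T_i)` is a biclique of `K_g`, every edge of
`K_g` is covered, and every vertex lies in at most `r` of the `S_i` and at most `w`
of the `T_i`. -/
theorem weakly_cross_intersecting_iff_dual_biclique_cover
    (g h r w : ℕ) (hg : 0 < g) (hh : 0 < h) (hr : 0 < r) (hw : 0 < w)
    (A B : Fin g → Finset (Fin h))
    (S : Fin h → Finset (Fin g)) (T : Fin h → Finset (Fin g))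
    (hS : ∀ i, S i = Finset.univ.filter (fun j => i ∈ A j))
    (hT : ∀ i, T i = Finset.univ.filter (fun j => i ∈ B j)) :
    ((∀ j, Disjoint (A j) (B j)) ∧
       (∀ j k, j ≠ k → ((A j ∩ B k) ∪ (A k ∩ B j)).Nonempty) ∧
       (∀ j, (A j).card ≤ r) ∧ (∀ j, (B j).card ≤ w))
    ↔
    ((∀ i, Disjoint (S i) (T i)) ∧
       (∀ i, ∀ x ∈ S i, ∀ y ∈ T i, (⊤ : SimpleGraph (Fin g)).Adj x y) ∧
       (∀ x y : Fin g, (⊤ : SimpleGraph (Fin g)).Adj x y →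
         ∃ i, (x ∈ S i ∧ y ∈ T i) ∨ (y ∈ S i ∧ x ∈ T i)) ∧
       (∀ v : Fin g, (Finset.univ.filter (fun i => v ∈ S i)).card ≤ r) ∧
       (∀ v : Fin g, (Finset.univ.filter (fun i => v ∈ T i)).card ≤ w)) :=
  weakly_cross_intersecting_iff_dual_biclique_cover_general g h r w A B S T hS hT
end
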